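/- arXiv:2102.13075 — 3 statements merged into one kernel-verified Lean document; each statement's English description precedes it below -/
import Mathlib

section
/- Let 𝒫 be an imprecise probability tree and Q̄ an upper expectation tree that agree. Then for every situation s and every global variable f: Ω → ℝ̄ that is the pointwise limit of a nondecreasing or of a non-increasing sequence of finitary gambles, Ē_𝒫(f|s) = Ē_Q̄(f|s). -/
/-!
For a compatible precise tree `p`, agreement makes every game-theoretic supermartingale a
`p`-supermartingale, and Fatou's lemma then bounds the `P_p`-integral of anything it superhedges
by its initial value; so `Ē_𝒫 ≤ Ē_Q̄` for every measurable variable. For a finitary gamble the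
game-theoretic side is bounded by backward induction under `Q̄`, and choosing in every situation a
nearly optimal mass function from the credal set shows that this value is almost attained by some
`p ∼ 𝒫`. The reverse inequality passes to monotone limits. Upwards, the supremum of the canonical
supermartingales of the approximants is itself a supermartingale. Downwards, the credal sets are
compact, so trees that are nearly optimal for the individual approximants accumulate at a single
compatible tree that is nearly optimal for all of them, and monotone convergence applies to it.
-/

open Filter MeasureTheory Topology
open scoped ENNReal

namespace UEPaper

variable {X : Type} [Fintype X] [Nonempty X] [DecidableEq X]

/-- The set of paths: infinite sequences of states (`ω i` is the `(i+1)`-th state). -/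
abbrev Path (X : Type) := ℕ → X

/-- The prefix `ω^k` of length `k` of a path, as a list (a situation). -/
def prefixList (ω : Path X) (k : ℕ) : List X := (List.range k).map ω

/-- The cylinder event `Γ(s)` of a situation `s`. -/
def cyl (s : List X) : Set (Path X) := {ω | prefixList ω s.length = s}

/-- `f` is `n`-measurable: it depends only on the first `n` states. -/
def NMeas (n : ℕ) (f : Path X → EReal) : Prop :=
  ∀ ω ω' : Path X, prefixList ω n = prefixList ω' n → f ω = f ω'

/-- A gamble: a bounded real-valued global variable. -/
def IsGamble (f : Path X → EReal) : Prop :=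
  ∃ B : ℝ, ∀ ω, -(B : EReal) ≤ f ω ∧ f ω ≤ (B : EReal)

/-- A finitary gamble: an `n`-measurable gamble for some `n`. -/
def IsFinGamble (f : Path X → EReal) : Prop :=
  (∃ n, NMeas n f) ∧ IsGamble f

/-- An upper expectation tree: a coherent upper expectation at each situation. -/
structure UpperExpTree (X : Type) [Fintype X] [Nonempty X] where
  Q : List X → (X → ℝ) → ℝ
  le_sup : ∀ (s : List X) (f : X → ℝ), Q s f ≤ ⨆ x, f x
  subadd : ∀ (s : List X) (f g : X → ℝ), Q s (f + g) ≤ Q s f + Q s g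
  pos_homog : ∀ (s : List X) (l : ℝ) (f : X → ℝ), 0 ≤ l → Q s (l • f) = l * Q s f

/-- A (real-valued) supermartingale for the upper expectation tree `Q`. -/
def IsSupermart (Q : UpperExpTree X) (M : List X → ℝ) : Prop :=
  ∀ s : List X, Q.Q s (fun x => M (s ++ [x])) ≤ M s

/-- The game-theoretic upper expectation of a real-valued variable (used on gambles):
the infimum of `M s` over bounded-below supermartingales `M` with
`liminf_k M(ω^k) ≥ f(ω)` on `Γ(s)`. -/
noncomputable def gtG (Q : UpperExpTree X) (f : Path X → ℝ) (s : List X) : EReal :=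
  sInf {a : EReal | ∃ M : List X → ℝ, IsSupermart Q M ∧ (∃ B : ℝ, ∀ t, B ≤ M t) ∧
    (∀ ω ∈ cyl s,
      (f ω : EReal) ≤ Filter.liminf (fun k => ((M (prefixList ω k) : ℝ) : EReal)) atTop) ∧
    a = ((M s : ℝ) : EReal)}

/-- Extension to bounded-below variables, by continuity w.r.t. upper cuts:
`Ē(f|s) = lim_{c → +∞} Ē(min(f,c)|s)` (the limit of this nondecreasing net is a supremum). -/
noncomputable def gtBB (Q : UpperExpTree X) (f : Path X → EReal) (s : List X) : EReal :=
  ⨆ c : ℝ, gtG Q (fun ω => (f ω ⊓ (c : EReal)).toReal) s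

/-- The game-theoretic global upper expectation `Ē_Q̄`, extended to all extended
real variables by continuity w.r.t. lower cuts:
`Ē(f|s) = lim_{c → −∞} Ē(max(f,c)|s)` (the limit of this nonincreasing net is an infimum). -/
noncomputable def gtUE (Q : UpperExpTree X) (f : Path X → EReal) (s : List X) : EReal :=
  ⨅ c : ℝ, gtBB Q (fun ω => f ω ⊔ (c : EReal)) s

/-- A precise probability tree: a probability mass function at each situation. -/
structure PreciseTree (X : Type) [Fintype X] where
  p : List X → X → ℝ
  nonneg : ∀ (s : List X) (x : X), 0 ≤ p s x
  sum_one : ∀ s : List X, ∑ x, p s x = 1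

/-- An imprecise probability tree: a nonempty closed convex set of probability mass
functions at each situation. -/
structure ImpreciseTree (X : Type) [Fintype X] where
  sets : List X → Set (X → ℝ)
  nonempty' : ∀ s : List X, (sets s).Nonempty
  closed' : ∀ s : List X, IsClosed (sets s)
  convex' : ∀ s : List X, Convex ℝ (sets s)
  prob' : ∀ s : List X, ∀ q ∈ sets s, (∀ x, 0 ≤ q x) ∧ ∑ x, q x = 1

/-- `p ∼ 𝒫`: the precise tree `p` is compatible with the imprecise tree `P`. -/
def Compatible (p : PreciseTree X) (P : ImpreciseTree X) : Prop :=
  ∀ s : List X, p.p s ∈ P.sets s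

/-- The probability `P_p(Γ(z)|s)` of the cylinder of `z` conditional on situation `s`. -/
noncomputable def cylProb (p : List X → X → ℝ) (s z : List X) : ℝ :=
  if s.length < z.length ∧ z.take s.length = s then
    ∏ i ∈ Finset.Ico s.length z.length, p (z.take i) (z.getD i (Classical.arbitrary X))
  else if z.length ≤ s.length ∧ s.take z.length = z then 1 else 0

/-- The σ-algebra `ℱ` on paths generated by the cylinder events. -/
instance cylSigma : MeasurableSpace (Path X) :=
  MeasurableSpace.generateFrom {A | ∃ s : List X, A = cyl s}

/-- `μ` is the probability measure `P_p(·|s)` on `ℱ` determined by the tree `p`. -/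
def IsTreeMeasure (p : PreciseTree X) (s : List X) (μ : Measure (Path X)) : Prop :=
  IsProbabilityMeasure μ ∧ ∀ z : List X, μ (cyl z) = ENNReal.ofReal (cylProb p.p s z)

/-- Positive part of an extended real, in `ℝ≥0∞`. -/
noncomputable def posPart (x : EReal) : ℝ≥0∞ := if x = ⊤ then ⊤ else ENNReal.ofReal x.toReal

/-- The Lebesgue integral `∫ g dμ = ∫ g⁺ dμ − ∫ g⁻ dμ` of an extended-real variable
(well-defined, with value in `(-∞, +∞]`, for bounded-below measurable `g`). -/
noncomputable def integralE (μ : Measure (Path X)) (g : Path X → EReal) : EReal :=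
  ((∫⁻ ω, posPart (g ω) ∂μ : ℝ≥0∞) : EReal) - ((∫⁻ ω, posPart (-(g ω)) ∂μ : ℝ≥0∞) : EReal)

/-- The upper integral `Ē_p(f|s)`: infimum of integrals of bounded-below
`ℱ`-measurable variables dominating `f`. -/
noncomputable def upperInt (μ : Measure (Path X)) (f : Path X → EReal) : EReal :=
  sInf {a : EReal | ∃ g : Path X → EReal, Measurable g ∧ (∃ B : ℝ, ∀ ω, (B : EReal) ≤ g ω) ∧
    (∀ ω, f ω ≤ g ω) ∧ a = integralE μ g}

/-- The measure-theoretic global upper expectation `Ē_𝒫(f|s)`, given the assignment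
`Pm` of the measures `P_p(·|s)` to precise trees: the upper envelope of the upper
integrals over all compatible precise trees. -/
noncomputable def muUE (Pm : PreciseTree X → List X → Measure (Path X))
    (P : ImpreciseTree X) (f : Path X → EReal) (s : List X) : EReal :=
  ⨆ (p : PreciseTree X) (_ : Compatible p P), upperInt (Pm p s) f

/-- The trees `P` and `Q` agree: each `Q̄_s` is the upper envelope of the expectations
corresponding to the credal set `𝒫_s`. -/
def Agree (P : ImpreciseTree X) (Q : UpperExpTree X) : Prop :=
  ∀ (s : List X) (f : X → ℝ),
    Q.Q s f = sSup {r : ℝ | ∃ q ∈ P.sets s, r = ∑ x, f x * q x}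

/-- Axioms P1–P5 for a global upper expectation `E` w.r.t. the tree `Q`. -/
structure Axioms (Q : UpperExpTree X) (E : (Path X → EReal) → List X → EReal) : Prop where
  p1 : ∀ (f : X → ℝ) (s : List X),
    E (fun ω => ((f (ω s.length) : ℝ) : EReal)) s = ((Q.Q s f : ℝ) : EReal)
  p2 : ∀ f : Path X → EReal, IsFinGamble f → ∀ s : List X, E f s = E ((cyl s).indicator f) s
  p3 : ∀ f : Path X → EReal, IsFinGamble f → ∀ s : List X,
    E f s ≤ E (fun ω => E f (prefixList ω (s.length + 1))) s
  p4 : ∀ f g : Path X → EReal, (∀ ω, f ω ≤ g ω) → ∀ s : List X, E f s ≤ E g s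
  p5 : ∀ (s : List X) (fn : ℕ → Path X → EReal) (f : Path X → EReal),
    (∀ n, IsFinGamble (fn n)) → (∃ B : ℝ, ∀ n ω, (B : EReal) ≤ fn n ω) →
    (∀ ω, Tendsto (fun n => fn n ω) atTop (nhds (f ω))) →
    E f s ≤ limsup (fun n => E (fn n) s) atTop

/-- Upper semicontinuity of an extended-real variable on the path space. -/
def USC [TopologicalSpace X] [DiscreteTopology X] (f : Path X → EReal) : Prop :=
  ∀ a : ℝ, IsOpen {ω : Path X | f ω < (a : EReal)}

/-- An `Ω`-capacity (Dellacherie): a monotone `[0,∞]`-valued functional on nonnegative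
variables, continuous along nondecreasing sequences, and continuous along
nonincreasing sequences of nonnegative real-valued upper semicontinuous functions. -/
def IsCapacity [TopologicalSpace X] [DiscreteTopology X]
    (F : (Path X → EReal) → EReal) : Prop :=
  (∀ f : Path X → EReal, (∀ ω, 0 ≤ f ω) → 0 ≤ F f) ∧
  (∀ f g : Path X → EReal, (∀ ω, 0 ≤ f ω) → (∀ ω, 0 ≤ g ω) → (∀ ω, f ω ≤ g ω) → F f ≤ F g) ∧
  (∀ fn : ℕ → Path X → EReal, (∀ n ω, 0 ≤ fn n ω) → Monotone fn →
    Tendsto (fun n => F (fn n)) atTop (nhds (F (fun ω => ⨆ n, fn n ω)))) ∧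
  (∀ fn : ℕ → Path X → EReal, (∀ n ω, 0 ≤ fn n ω ∧ fn n ω < ⊤) → (∀ n, USC (fn n)) →
    Antitone fn →
    Tendsto (fun n => F (fn n)) atTop (nhds (F (fun ω => ⨅ n, fn n ω))))

open Classical in
/-- The metric `δ(ω,ω') = 2^{-n}`, `n` the first (1-based) index where `ω` and `ω'` differ. -/
noncomputable def delta (ω ω' : Path X) : ℝ :=
  if h : ω = ω' then 0
  else (1 / 2 : ℝ) ^ (Nat.find (Function.ne_iff.mp h) + 1)

/-- The product topology on the path space (with `X` discrete). -/
def prodTop (X : Type) : TopologicalSpace (ℕ → X) :=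
  @Pi.topologicalSpace ℕ (fun _ => X) (fun _ => ⊥)

end UEPaper

namespace UEPaper

namespace UpperExpTree

variable {X : Type} [Fintype X] [Nonempty X] (Q : UpperExpTree X) (t : List X)

lemma Q_zero : Q.Q t 0 = 0 := by
  simpa using Q.pos_homog t 0 0 le_rfl

lemma Q_le_of_forall_le {g : X → ℝ} {B : ℝ} (h : ∀ x, g x ≤ B) : Q.Q t g ≤ B :=
  (Q.le_sup t g).trans (ciSup_le h)

lemma Q_mono {g h : X → ℝ} (hgh : ∀ x, g x ≤ h x) : Q.Q t g ≤ Q.Q t h := by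
  have hsub := Q.subadd t h (g - h)
  rw [add_sub_cancel] at hsub
  linarith [Q.Q_le_of_forall_le t (g := g - h) (B := 0) fun x => sub_nonpos.mpr (hgh x)]

lemma le_Q_of_forall_le {g : X → ℝ} {B : ℝ} (h : ∀ x, B ≤ g x) : B ≤ Q.Q t g := by
  have hsub := Q.subadd t g (-g)
  rw [add_neg_cancel, Q_zero] at hsub
  linarith [Q.Q_le_of_forall_le t (g := -g) (B := -B) fun x => neg_le_neg (h x)]

lemma Q_const (c : ℝ) : Q.Q t (fun _ => c) = c :=
  le_antisymm (Q.Q_le_of_forall_le t fun _ => le_rfl) (Q.le_Q_of_forall_le t fun _ => le_rfl)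

lemma Q_add_const_le (g : X → ℝ) (c : ℝ) : Q.Q t (fun x => g x + c) ≤ Q.Q t g + c :=
  (Q.subadd t g fun _ => c).trans_eq (by rw [Q_const])

end UpperExpTree

section Paths

variable {X : Type}

@[simp]
lemma length_prefixList (ω : Path X) (k : ℕ) : (prefixList ω k).length = k := by
  simp [prefixList]

lemma take_prefixList (ω : Path X) {m n : ℕ} (h : m ≤ n) :
    (prefixList ω n).take m = prefixList ω m := by
  apply List.ext_getElem
  · simp; omega
  · simp [prefixList]

lemma measurableSet_cyl (t : List X) : MeasurableSet (cyl t) :=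
  MeasurableSpace.measurableSet_generateFrom ⟨t, rfl⟩

variable [Nonempty X]

noncomputable def toPath (t : List X) : Path X := fun i => t.getD i (Classical.arbitrary X)

lemma prefixList_toPath {t : List X} {n : ℕ} (h : n ≤ t.length) :
    prefixList (toPath t) n = t.take n := by
  apply List.ext_getElem
  · simp; omega
  · intro i h1 _
    have hit : i < t.length := by simp at h1; omega
    simp [prefixList, toPath, List.getElem?_eq_getElem hit]

lemma IsFinGamble.exists_eq_comp_prefixList {g : Path X → EReal} (hg : IsFinGamble g) :
    ∃ (n : ℕ) (u : List X → ℝ), ∀ ω, g ω = u (prefixList ω n) := by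
  obtain ⟨⟨n, hn⟩, B, hB⟩ := hg
  refine ⟨n, fun t => (g (toPath t)).toReal, fun ω => ?_⟩
  dsimp only
  rw [← hn ω (toPath (prefixList ω n))
    (by rw [prefixList_toPath (by simp), List.take_of_length_le (by simp)])]
  exact (EReal.coe_toReal (ne_top_of_le_ne_top (EReal.coe_ne_top B) (hB ω).2)
    (ne_bot_of_le_ne_bot (EReal.coe_ne_bot (-B)) (by simpa using (hB ω).1))).symm

end Paths

section Finitary

variable {X : Type} [Fintype X]

lemma measurable_comp_prefixList {β : Type*} [MeasurableSpace β] (g : List X → β) (n : ℕ) :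
    Measurable fun ω : Path X => g (prefixList ω n) := by
  intro B _
  have hpre : (fun ω : Path X => g (prefixList ω n)) ⁻¹' B =
      ⋃ (t : List X) (_ : t.length = n ∧ g t ∈ B), cyl t := by
    ext ω
    simp only [Set.mem_preimage, Set.mem_iUnion]
    constructor
    · exact fun hω => ⟨_, ⟨length_prefixList ω n, hω⟩, by simp [cyl]⟩
    · rintro ⟨t, ⟨hlen, htB⟩, hωt⟩
      rwa [← hlen, hωt]
  rw [hpre]
  exact .iUnion fun t => .iUnion fun _ => measurableSet_cyl t

end Finitary

section LocalModel

variable {X : Type}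

/-- Both the local upper expectations `Q.Q` of an upper expectation tree and the local
expectations of a precise tree are local models, so backward induction is developed once. -/
structure IsLocalModel (E : List X → (X → ℝ) → ℝ) : Prop where
  mono : ∀ t {g h : X → ℝ}, (∀ x, g x ≤ h x) → E t g ≤ E t h
  const : ∀ t c, E t (fun _ => c) = c

noncomputable def backward (E : List X → (X → ℝ) → ℝ) (u : List X → ℝ) : ℕ → List X → ℝ
  | 0 => u
  | m + 1 => fun t => E t fun x => backward E u m (t ++ [x])

/-- The value in situation `t` of the finitary gamble `ω ↦ u (ω^n)` under `E`. -/
noncomputable def finVal (E : List X → (X → ℝ) → ℝ) (u : List X → ℝ) (n : ℕ) (t : List X) :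
    ℝ :=
  backward E (fun r => u (r.take n)) (n - t.length) t

variable {E : List X → (X → ℝ) → ℝ}

lemma backward_succ' (u : List X → ℝ) (m : ℕ) (t : List X) :
    backward E u (m + 1) t = backward E (fun r => E r fun x => u (r ++ [x])) m t := by
  induction m generalizing t with
  | zero => rfl
  | succ m ih => exact congrArg (E t) (funext fun x => ih (t ++ [x]))

lemma finVal_of_le {u : List X → ℝ} {n : ℕ} {t : List X} (h : n ≤ t.length) :
    finVal E u n t = u (t.take n) := by
  rw [finVal, Nat.sub_eq_zero_of_le h]
  rfl

lemma le_liminf_finVal (u : List X → ℝ) (n : ℕ) (ω : Path X) :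
    (u (prefixList ω n) : EReal) ≤
      liminf (fun k => (finVal E u n (prefixList ω k) : EReal)) atTop :=
  le_liminf_of_le (by isBoundedDefault) <| (eventually_ge_atTop n).mono fun k hk => by
    rw [finVal_of_le (by simpa using hk), take_prefixList ω hk]

namespace IsLocalModel

lemma finVal_step (hE : IsLocalModel E) (u : List X → ℝ) (n : ℕ) (t : List X) :
    finVal E u n t = E t fun x => finVal E u n (t ++ [x]) := by
  by_cases h : t.length < n
  · rw [finVal, show n - t.length = n - (t.length + 1) + 1 by omega]
    exact congrArg (E t) (funext fun x => by simp [finVal])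
  · rw [not_lt] at h
    have hx : ∀ x, finVal E u n (t ++ [x]) = u (t.take n) := fun x => by
      rw [finVal_of_le (by simp; omega), List.take_append_of_le_length h]
    simp_rw [hx, hE.const, finVal_of_le h]

lemma le_of_backward_induction (hE : IsLocalModel E) {F G : List X → ℝ} {s : List X} {N : ℕ}
    (hsN : s.length ≤ N)
    (hbase : ∀ t, s <+: t → t.length = N → F t ≤ G t)
    (hF : ∀ t, s <+: t → t.length < N → F t ≤ E t fun x => F (t ++ [x]))
    (hG : ∀ t, s <+: t → t.length < N → (E t fun x => G (t ++ [x])) ≤ G t) :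
    F s ≤ G s := by
  suffices ∀ d t, s <+: t → t.length + d = N → F t ≤ G t from
    this (N - s.length) s List.prefix_rfl (by omega)
  intro d
  induction d with
  | zero => exact hbase
  | succ d ih =>
    intro t hst ht
    have hlt : t.length < N := by omega
    calc F t ≤ E t fun x => F (t ++ [x]) := hF t hst hlt
      _ ≤ E t fun x => G (t ++ [x]) :=
        hE.mono t fun x => ih _ (hst.trans (List.prefix_append _ _)) (by simp; omega)
      _ ≤ G t := hG t hst hlt

lemma finVal_le_of_supermart (hE : IsLocalModel E) {M : List X → ℝ}
    (hM : ∀ t, (E t fun x => M (t ++ [x])) ≤ M t) {k : ℕ} {s : List X} (hk : s.length ≤ k) :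
    finVal E M k s ≤ M s :=
  hE.le_of_backward_induction hk
    (fun t _ ht => by rw [finVal_of_le ht.ge, List.take_of_length_le ht.le])
    (fun t _ _ => (hE.finVal_step M k t).le) (fun t _ _ => hM t)

variable [Nonempty X] {u v : List X → ℝ} {n m : ℕ}

lemma finVal_mono (hE : IsLocalModel E)
    (h : ∀ ω : Path X, u (prefixList ω n) ≤ v (prefixList ω m)) (t : List X) :
    finVal E u n t ≤ finVal E v m t := by
  apply hE.le_of_backward_induction (N := max (max n m) t.length) (le_max_right _ _)
  · intro r _ hr
    rw [finVal_of_le (by omega), finVal_of_le (by omega), ← prefixList_toPath (by omega),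
      ← prefixList_toPath (by omega)]
    exact h _
  · exact fun r _ _ => (hE.finVal_step u n r).le
  · exact fun r _ _ => (hE.finVal_step v m r).ge

lemma finVal_congr (hE : IsLocalModel E)
    (h : ∀ ω : Path X, u (prefixList ω n) = v (prefixList ω m)) (t : List X) :
    finVal E u n t = finVal E v m t :=
  le_antisymm (hE.finVal_mono (fun ω => (h ω).le) t) (hE.finVal_mono (fun ω => (h ω).ge) t)

lemma finVal_le_of_forall (hE : IsLocalModel E) {C : ℝ} (h : ∀ ω : Path X, u (prefixList ω n) ≤ C)
    (t : List X) :
    finVal E u n t ≤ C := by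
  simpa [finVal_of_le] using hE.finVal_mono (v := fun _ => C) (m := 0) h t

lemma le_finVal_of_forall (hE : IsLocalModel E) {B : ℝ} (h : ∀ ω : Path X, B ≤ u (prefixList ω n))
    (t : List X) :
    B ≤ finVal E u n t := by
  simpa [finVal_of_le] using hE.finVal_mono (u := fun _ => B) (n := 0) h t

end IsLocalModel

end LocalModel

section Trees

variable {X : Type} [Fintype X]

lemma UpperExpTree.isLocalModel [Nonempty X] (Q : UpperExpTree X) : IsLocalModel Q.Q :=
  ⟨Q.Q_mono, Q.Q_const⟩

lemma isSupermart_finVal [Nonempty X] (Q : UpperExpTree X) (u : List X → ℝ) (n : ℕ) :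
    IsSupermart Q (finVal Q.Q u n) :=
  fun t => (Q.isLocalModel.finVal_step u n t).ge

noncomputable def PreciseTree.exp (p : PreciseTree X) (t : List X) (g : X → ℝ) : ℝ :=
  ∑ x, g x * p.p t x

namespace PreciseTree

variable (p : PreciseTree X)

lemma exp_add_const (t : List X) (g : X → ℝ) (c : ℝ) :
    p.exp t (fun x => g x + c) = p.exp t g + c := by
  simp [exp, add_mul, Finset.sum_add_distrib, ← Finset.mul_sum, p.sum_one]

lemma isLocalModel : IsLocalModel p.exp :=
  ⟨fun t _ _ hgh => Finset.sum_le_sum fun x _ => mul_le_mul_of_nonneg_right (hgh x) (p.nonneg t x),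
    fun t c => by simp [exp, ← Finset.mul_sum, p.sum_one]⟩

end PreciseTree

variable [Nonempty X] {P : ImpreciseTree X} {Q : UpperExpTree X}

namespace Agree

lemma sum_mul_le (hagree : Agree P Q) {t : List X} {q : X → ℝ} (hq : q ∈ P.sets t)
    (g : X → ℝ) : ∑ x, g x * q x ≤ Q.Q t g := by
  rw [hagree t g]
  refine le_csSup ⟨∑ x, |g x|, ?_⟩ ⟨q, hq, rfl⟩
  rintro r ⟨q', hq', rfl⟩
  obtain ⟨hq'0, hq'1⟩ := P.prob' t q' hq'
  refine Finset.sum_le_sum fun x _ => ?_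
  calc g x * q' x ≤ |g x| * q' x := mul_le_mul_of_nonneg_right (le_abs_self _) (hq'0 x)
    _ ≤ |g x| * 1 := by
      gcongr
      exact hq'1 ▸ Finset.single_le_sum (fun y _ => hq'0 y) (Finset.mem_univ x)
    _ = |g x| := mul_one _

lemma exists_lt_sum_mul (hagree : Agree P Q) (t : List X) (g : X → ℝ) {ε : ℝ} (hε : 0 < ε) :
    ∃ q ∈ P.sets t, Q.Q t g - ε < ∑ x, g x * q x := by
  obtain ⟨q₀, hq₀⟩ := P.nonempty' t
  have hne : {r : ℝ | ∃ q ∈ P.sets t, r = ∑ x, g x * q x}.Nonempty := ⟨_, q₀, hq₀, rfl⟩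
  have hlt : Q.Q t g - ε < sSup {r : ℝ | ∃ q ∈ P.sets t, r = ∑ x, g x * q x} := by
    rw [← hagree t g]
    linarith
  obtain ⟨_, ⟨q, hq, rfl⟩, hr⟩ := exists_lt_of_lt_csSup hne hlt
  exact ⟨q, hq, hr⟩

lemma exp_le (hagree : Agree P Q) {p : PreciseTree X} (hp : Compatible p P) (t : List X)
    (g : X → ℝ) : p.exp t g ≤ Q.Q t g :=
  hagree.sum_mul_le (hp t) g

/-- Choosing, in every situation, a mass function that is `δ`-optimal for the next step of the
game-theoretic backward induction loses at most `δ` per step. -/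
lemma exists_compatible_finVal_le (hagree : Agree P Q) (u : List X → ℝ) (n : ℕ) (s : List X)
    {ε : ℝ} (hε : 0 < ε) :
    ∃ p : PreciseTree X, Compatible p P ∧ finVal Q.Q u n s - ε ≤ finVal p.exp u n s := by
  set N := max n s.length
  set δ := ε / (N + 1)
  have hδ : 0 < δ := by positivity
  choose q hq hqopt using fun t =>
    hagree.exists_lt_sum_mul t (fun x => finVal Q.Q u n (t ++ [x])) hδ
  let p : PreciseTree X := ⟨q, fun t => (P.prob' t _ (hq t)).1, fun t => (P.prob' t _ (hq t)).2⟩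
  refine ⟨p, hq, ?_⟩
  have hind : finVal Q.Q u n s - (N - s.length) * δ ≤ finVal p.exp u n s := by
    apply p.isLocalModel.le_of_backward_induction
      (F := fun t => finVal Q.Q u n t - (N - t.length) * δ) (N := N) (le_max_right _ _)
    · intro t _ ht
      have hnt : n ≤ t.length := ht ▸ le_max_left _ _
      simp [ht, finVal_of_le hnt]
    · intro t _ _
      have hstep : finVal Q.Q u n t - δ < p.exp t fun x => finVal Q.Q u n (t ++ [x]) := by
        rw [Q.isLocalModel.finVal_step]
        exact hqopt t
      have hshift := p.exp_add_const t (fun x => finVal Q.Q u n (t ++ [x]))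
        (-((N - (t.length + 1)) * δ))
      simp only [List.length_append, List.length_singleton, Nat.cast_add, Nat.cast_one,
        ← sub_eq_add_neg] at hshift ⊢
      linarith
    · exact fun t _ _ => (p.isLocalModel.finVal_step u n t).ge
  have hloss : ((N : ℝ) - s.length) * δ ≤ ε := by
    rw [mul_div_assoc', div_le_iff₀ (by positivity)]
    nlinarith [(Nat.cast_nonneg s.length : (0 : ℝ) ≤ _)]
  linarith

end Agree

end Trees

def situations (X : Type) [Fintype X] [DecidableEq X] : ℕ → Finset (List X)
  | 0 => {[]}
  | n + 1 => (situations X n ×ˢ Finset.univ).image fun tx => tx.1 ++ [tx.2]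

section Situations

variable {X : Type} [Fintype X] [DecidableEq X]

lemma mem_situations {n : ℕ} {t : List X} : t ∈ situations X n ↔ t.length = n := by
  induction n generalizing t with
  | zero => simp [situations]
  | succ n ih =>
    simp only [situations, Finset.mem_image, Finset.mem_product, Finset.mem_univ, and_true,
      Prod.exists, ih]
    constructor
    · rintro ⟨r, x, rfl, rfl⟩
      simp
    · intro h
      obtain ⟨r, x, rfl⟩ := List.eq_nil_or_concat t |>.resolve_left (by rintro rfl; simp at h)
      exact ⟨r, x, by simpa using h, by simp⟩

lemma sum_situations_succ {M : Type*} [AddCommMonoid M] (n : ℕ) (F : List X → M) :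
    ∑ t ∈ situations X (n + 1), F t = ∑ t ∈ situations X n, ∑ x, F (t ++ [x]) := by
  rw [situations, Finset.sum_image, Finset.sum_product]
  rintro ⟨t, x⟩ _ ⟨t', x'⟩ _ h
  obtain ⟨rfl, h'⟩ := List.append_inj' h rfl
  simp_all

end Situations

section CylProb

variable {X : Type} [Nonempty X] [DecidableEq X] {p : List X → X → ℝ} {s : List X}

lemma cylProb_nonneg (hp : ∀ t x, 0 ≤ p t x) (z : List X) : 0 ≤ cylProb p s z := by
  unfold cylProb
  split_ifs
  exacts [Finset.prod_nonneg fun i _ => hp _ _, zero_le_one, le_rfl]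

lemma cylProb_self : cylProb p s s = 1 := by
  rw [cylProb, if_neg (by simp), if_pos ⟨le_rfl, List.take_length⟩]

lemma cylProb_of_take_ne {z : List X} (hl : s.length ≤ z.length) (hc : z.take s.length ≠ s) :
    cylProb p s z = 0 := by
  rw [cylProb, if_neg (fun h => hc h.2), if_neg]
  rintro ⟨h1, h2⟩
  rw [le_antisymm h1 hl, List.take_length] at h2
  exact hc (by rw [← h2, List.take_length])

lemma cylProb_of_length_eq {z : List X} (hl : z.length = s.length) (hzs : z ≠ s) :
    cylProb p s z = 0 :=
  cylProb_of_take_ne hl.ge (by rwa [← hl, List.take_length])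

lemma cylProb_append {t : List X} (hl : s.length ≤ t.length) (x : X) :
    cylProb p s (t ++ [x]) = cylProb p s t * p t x := by
  have htake : (t ++ [x]).take s.length = t.take s.length := List.take_append_of_le_length hl
  by_cases hc : t.take s.length = s
  · rw [cylProb, if_pos ⟨by simp; omega, htake.trans hc⟩]
    simp only [List.length_append, List.length_singleton]
    rw [Finset.prod_Ico_succ_top hl]
    congr 1
    · rcases hl.lt_or_eq with hlt | heq
      · rw [cylProb, if_pos ⟨hlt, hc⟩]
        refine Finset.prod_congr rfl fun i hi => ?_
        have hi' : i < t.length := (Finset.mem_Ico.mp hi).2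
        rw [List.take_append_of_le_length hi'.le, List.getD_append _ _ _ _ hi']
      · have hts : t = s := by rw [← hc, heq, List.take_length]
        subst hts
        simp [cylProb_self]
    · rw [List.take_append_of_le_length le_rfl, List.take_length,
        List.getD_append_right _ _ _ _ le_rfl]
      simp
  · rw [cylProb_of_take_ne (by simp; omega) (htake ▸ hc), cylProb_of_take_ne hl hc, zero_mul]

end CylProb

section Expectation

variable {X : Type} [Fintype X] [Nonempty X] [DecidableEq X] (p : PreciseTree X)

lemma backward_exp_eq_sum (s : List X) (m : ℕ) (u : List X → ℝ) :
    backward p.exp u m s = ∑ r ∈ situations X (s.length + m), cylProb p.p s r * u r := by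
  induction m generalizing u with
  | zero =>
    rw [add_zero, Finset.sum_eq_single_of_mem s (mem_situations.mpr rfl), cylProb_self, one_mul]
    · rfl
    · exact fun r hr hrs => by rw [cylProb_of_length_eq (mem_situations.mp hr) hrs, zero_mul]
  | succ m ih =>
    rw [backward_succ', ih, ← add_assoc, sum_situations_succ]
    refine Finset.sum_congr rfl fun r hr => ?_
    have hlen : s.length ≤ r.length := by rw [mem_situations.mp hr]; omega
    simp only [PreciseTree.exp, Finset.mul_sum, cylProb_append hlen]
    exact Finset.sum_congr rfl fun x _ => by ring

lemma finVal_exp_eq_sum {s : List X} {N : ℕ} (hN : s.length ≤ N) (u : List X → ℝ) :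
    finVal p.exp u N s = ∑ r ∈ situations X N, cylProb p.p s r * u r := by
  rw [finVal, backward_exp_eq_sum, Nat.add_sub_cancel' hN]
  exact Finset.sum_congr rfl fun r hr => by rw [List.take_of_length_le (mem_situations.mp hr).le]

variable {p} {s : List X} {μ : Measure (Path X)}

lemma lintegral_comp_prefixList (hμ : IsTreeMeasure p s μ) (g : List X → ℝ≥0∞) (n : ℕ) :
    ∫⁻ ω, g (prefixList ω n) ∂μ =
      ∑ r ∈ situations X n, ENNReal.ofReal (cylProb p.p s r) * g r := by
  have hsplit : ∀ ω : Path X,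
      g (prefixList ω n) = ∑ r ∈ situations X n, (cyl r).indicator (fun _ => g r) ω := by
    intro ω
    rw [Finset.sum_eq_single_of_mem _ (mem_situations.mpr (length_prefixList ω n)),
      Set.indicator_of_mem (by simp [cyl])]
    intro r hr hne
    refine Set.indicator_of_notMem (fun hω => hne ?_) _
    rw [← hω, mem_situations.mp hr]
  simp_rw [hsplit]
  rw [lintegral_finsetSum _ fun r _ => measurable_const.indicator (measurableSet_cyl r)]
  refine Finset.sum_congr rfl fun r _ => ?_
  rw [lintegral_indicator_const (measurableSet_cyl r), hμ.2, mul_comm]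

lemma integralE_comp_prefixList (hμ : IsTreeMeasure p s μ) (u : List X → ℝ) (n : ℕ) :
    integralE μ (fun ω => (u (prefixList ω n) : EReal)) =
      ((∑ r ∈ situations X n, cylProb p.p s r * u r : ℝ) : EReal) := by
  have hpart : ∀ v : List X → ℝ, ∫⁻ ω, posPart (v (prefixList ω n)) ∂μ =
      ENNReal.ofReal (∑ r ∈ situations X n, cylProb p.p s r * max (v r) 0) := by
    intro v
    rw [lintegral_comp_prefixList hμ (fun r => posPart (v r)), ENNReal.ofReal_sum_of_nonneg
      fun r _ => mul_nonneg (cylProb_nonneg p.nonneg r) (le_max_right _ _)]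
    refine Finset.sum_congr rfl fun r _ => ?_
    rw [ENNReal.ofReal_mul (cylProb_nonneg p.nonneg r), ENNReal.ofReal_max, ENNReal.ofReal_zero,
      max_eq_left zero_le]
    rfl
  have hneg := hpart fun r => -u r
  simp_rw [integralE, ← EReal.coe_neg]
  rw [hpart, hneg, EReal.coe_ennreal_ofReal, EReal.coe_ennreal_ofReal,
    max_eq_left (Finset.sum_nonneg fun r _ => mul_nonneg (cylProb_nonneg p.nonneg r)
      (le_max_right _ _)),
    max_eq_left (Finset.sum_nonneg fun r _ => mul_nonneg (cylProb_nonneg p.nonneg r)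
      (le_max_right _ _)), ← EReal.coe_sub, ← Finset.sum_sub_distrib]
  simp_rw [← mul_sub, max_zero_sub_max_neg_zero_eq_self]

lemma integralE_finitary (hμ : IsTreeMeasure p s μ) (u : List X → ℝ) (n : ℕ) :
    integralE μ (fun ω => (u (prefixList ω n) : EReal)) = finVal p.exp u n s := by
  have hlevel : ∀ ω : Path X,
      u (prefixList ω n) = u ((prefixList ω (max n s.length)).take n) :=
    fun ω => by rw [take_prefixList ω (le_max_left _ _)]
  have hsum := integralE_comp_prefixList hμ (fun r => u (r.take n)) (max n s.length)
  simp_rw [hlevel, hsum, ← finVal_exp_eq_sum p (le_max_right _ _)]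
  rw [p.isLocalModel.finVal_congr (fun ω => (hlevel ω).symm)]

end Expectation

lemma EReal.continuous_add_coe (B : ℝ) : Continuous fun x : EReal => x + B :=
  continuous_iff_continuousAt.2 fun _ =>
    (EReal.continuousAt_add (Or.inr (EReal.coe_ne_bot B)) (Or.inr (EReal.coe_ne_top B))).comp
      (continuousAt_id.prodMk continuousAt_const)

lemma EReal.continuous_sub_coe (B : ℝ) : Continuous fun x : EReal => x - B := by
  simpa [sub_eq_add_neg, ← EReal.coe_neg] using EReal.continuous_add_coe (-B)

lemma EReal.monotone_toENNReal_sub_coe (B : ℝ) : Monotone fun x : EReal => (x - B).toENNReal :=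
  fun _ _ h => EReal.toENNReal_le_toENNReal (EReal.sub_le_sub h le_rfl)

lemma EReal.monotone_coe_ennreal_add_coe (B : ℝ) : Monotone fun a : ℝ≥0∞ => (a : EReal) + B :=
  fun _ _ h => add_le_add_left (EReal.coe_ennreal_le_coe_ennreal_iff.mpr h) _

lemma EReal.continuous_coe_ennreal_add_coe (B : ℝ) : Continuous fun a : ℝ≥0∞ => (a : EReal) + B :=
  (EReal.continuous_add_coe B).comp continuous_coe_ennreal_ereal

lemma EReal.toENNReal_sub_coe_add_toENNReal_neg {y : EReal} {B : ℝ} (hB0 : B ≤ 0)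
    (hB : (B : EReal) ≤ y) :
    (y - B).toENNReal + (-y).toENNReal = y.toENNReal + ENNReal.ofReal (-B) := by
  induction y using EReal.rec with
  | bot => simp at hB
  | top => simp
  | coe x =>
    have hBx : B ≤ x := EReal.coe_le_coe_iff.mp hB
    rw [← EReal.coe_sub, ← EReal.coe_neg]
    simp only [EReal.real_coe_toENNReal]
    rcases le_total 0 x with hx | hx
    · rw [ENNReal.ofReal_of_nonpos (show -x ≤ 0 by linarith), add_zero, sub_eq_add_neg,
        ENNReal.ofReal_add hx (by linarith)]
    · rw [ENNReal.ofReal_of_nonpos hx, zero_add, ← ENNReal.ofReal_add (by linarith) (by linarith)]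
      congr 1
      ring

section Integral

variable {X : Type} {μ : Measure (Path X)}

lemma measurable_toENNReal_sub_coe {g : Path X → EReal} (hg : Measurable g) (B : ℝ) :
    Measurable fun ω => (g ω - B).toENNReal :=
  ((EReal.continuous_sub_coe B).measurable.comp hg).ereal_toENNReal

lemma posPart_eq_toENNReal (x : EReal) : posPart x = x.toENNReal := rfl

lemma integralE_mono_ae {g₁ g₂ : Path X → EReal} (h : ∀ᵐ ω ∂μ, g₁ ω ≤ g₂ ω) :
    integralE μ g₁ ≤ integralE μ g₂ := by
  refine EReal.sub_le_sub (EReal.coe_ennreal_le_coe_ennreal_iff.mpr (lintegral_mono_ae ?_))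
    (EReal.coe_ennreal_le_coe_ennreal_iff.mpr (lintegral_mono_ae ?_))
  · filter_upwards [h] with ω hω using EReal.toENNReal_le_toENNReal hω
  · filter_upwards [h] with ω hω using EReal.toENNReal_le_toENNReal (EReal.neg_le_neg_iff.mpr hω)

lemma integralE_mono {g₁ g₂ : Path X → EReal} (h : ∀ ω, g₁ ω ≤ g₂ ω) :
    integralE μ g₁ ≤ integralE μ g₂ :=
  integralE_mono_ae (ae_of_all _ h)

lemma integralE_eq_lintegral_add [IsProbabilityMeasure μ] {g : Path X → EReal} (hg : Measurable g)
    {B : ℝ} (hB0 : B ≤ 0) (hB : ∀ ω, (B : EReal) ≤ g ω) :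
    integralE μ g = ((∫⁻ ω, (g ω - B).toENNReal ∂μ : ℝ≥0∞) : EReal) + B := by
  have hpt : ∀ ω, (g ω - B).toENNReal + posPart (-g ω) = posPart (g ω) + ENNReal.ofReal (-B) :=
    fun ω => EReal.toENNReal_sub_coe_add_toENNReal_neg hB0 (hB ω)
  have hneg_le : ∫⁻ ω, posPart (-g ω) ∂μ ≤ ENNReal.ofReal (-B) := by
    refine (lintegral_mono fun ω => ?_).trans_eq (by rw [lintegral_const, measure_univ, mul_one])
    rw [posPart_eq_toENNReal, ← EReal.real_coe_toENNReal, EReal.coe_neg]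
    exact EReal.toENNReal_le_toENNReal (EReal.neg_le_neg_iff.mpr (hB ω))
  have hint := congrArg (fun F : Path X → ℝ≥0∞ => ∫⁻ ω, F ω ∂μ) (funext hpt)
  rw [lintegral_add_left (measurable_toENNReal_sub_coe hg B),
    lintegral_add_right _ measurable_const, lintegral_const, measure_univ, mul_one] at hint
  have hN : ∫⁻ ω, posPart (-g ω) ∂μ ≠ ⊤ := ne_top_of_le_ne_top ENNReal.ofReal_ne_top hneg_le
  rw [integralE, ← EReal.coe_ennreal_toReal hN]
  rcases eq_or_ne (∫⁻ ω, (g ω - B).toENNReal ∂μ) ⊤ with hA | hA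
  · rw [hA, top_add, eq_comm, ENNReal.add_eq_top] at hint
    rw [hA, hint.resolve_right ENNReal.ofReal_ne_top]
    simp
  · have hP : ∫⁻ ω, posPart (g ω) ∂μ ≠ ⊤ :=
      fun h => by simp [h, ENNReal.add_eq_top, hA, hN] at hint
    have hreal := congrArg ENNReal.toReal hint
    rw [ENNReal.toReal_add hA hN, ENNReal.toReal_add hP ENNReal.ofReal_ne_top,
      ENNReal.toReal_ofReal (by linarith)] at hreal
    rw [← EReal.coe_ennreal_toReal hA, ← EReal.coe_ennreal_toReal hP, ← EReal.coe_sub,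
      ← EReal.coe_add]
    exact EReal.coe_eq_coe_iff.mpr (by linarith)

lemma integralE_liminf_le [IsProbabilityMeasure μ] {g : ℕ → Path X → EReal}
    (hg : ∀ k, Measurable (g k)) {B : ℝ} (hB : ∀ k ω, (B : EReal) ≤ g k ω) :
    integralE μ (fun ω => liminf (fun k => g k ω) atTop) ≤
      liminf (fun k => integralE μ (g k)) atTop := by
  set B' := min B 0
  have hB' : ∀ k ω, (B' : EReal) ≤ g k ω := fun k ω =>
    (EReal.coe_le_coe_iff.mpr (min_le_left _ _)).trans (hB k ω)
  rw [integralE_eq_lintegral_add (Measurable.liminf hg) (min_le_right _ _)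
    fun ω => le_liminf_of_le (by isBoundedDefault) (.of_forall fun k => hB' k ω)]
  simp_rw [integralE_eq_lintegral_add (hg _) (min_le_right _ _) (hB' _)]
  calc ((∫⁻ ω, (liminf (fun k => g k ω) atTop - B').toENNReal ∂μ : ℝ≥0∞) : EReal) + B'
      = ((∫⁻ ω, liminf (fun k => (g k ω - B').toENNReal) atTop ∂μ : ℝ≥0∞) : EReal) + B' := by
        congr 3
        funext ω
        exact (EReal.monotone_toENNReal_sub_coe B').map_liminf_of_continuousAt _
          (EReal.continuous_sub_coe B').ereal_toENNReal.continuousAt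
    _ ≤ ((liminf (fun k => ∫⁻ ω, (g k ω - B').toENNReal ∂μ) atTop : ℝ≥0∞) : EReal) + B' :=
        EReal.monotone_coe_ennreal_add_coe B'
          (lintegral_liminf_le fun k => measurable_toENNReal_sub_coe (hg k) B')
    _ = liminf (fun k => ((∫⁻ ω, (g k ω - B').toENNReal ∂μ : ℝ≥0∞) : EReal) + B') atTop :=
        (EReal.monotone_coe_ennreal_add_coe B').map_liminf_of_continuousAt _
          (EReal.continuous_coe_ennreal_add_coe B').continuousAt

lemma integralE_iInf [IsProbabilityMeasure μ] {g : ℕ → Path X → EReal}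
    (hg : ∀ k, Measurable (g k)) (hanti : Antitone g) {B C : ℝ} (hB : ∀ k ω, (B : EReal) ≤ g k ω)
    (hC : ∀ ω, g 0 ω ≤ C) :
    integralE μ (fun ω => ⨅ k, g k ω) = ⨅ k, integralE μ (g k) := by
  set B' := min B 0
  have hB' : ∀ k ω, (B' : EReal) ≤ g k ω := fun k ω =>
    (EReal.coe_le_coe_iff.mpr (min_le_left _ _)).trans (hB k ω)
  rw [integralE_eq_lintegral_add (Measurable.iInf hg) (min_le_right _ _)
    fun ω => le_iInf fun k => hB' k ω]
  simp_rw [integralE_eq_lintegral_add (hg _) (min_le_right _ _) (hB' _)]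
  have hfin : ∫⁻ ω, (g 0 ω - B').toENNReal ∂μ ≠ ⊤ := by
    refine ne_top_of_le_ne_top (ENNReal.ofReal_ne_top (r := C - B')) ?_
    refine (lintegral_mono fun ω => ?_).trans_eq (by rw [lintegral_const, measure_univ, mul_one])
    rw [← EReal.real_coe_toENNReal, EReal.coe_sub]
    exact EReal.monotone_toENNReal_sub_coe B' (hC ω)
  calc ((∫⁻ ω, ((⨅ k, g k ω) - B').toENNReal ∂μ : ℝ≥0∞) : EReal) + B'
      = ((∫⁻ ω, ⨅ k, (g k ω - B').toENNReal ∂μ : ℝ≥0∞) : EReal) + B' := by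
        congr 3
        funext ω
        exact (EReal.monotone_toENNReal_sub_coe B').map_iInf_of_continuousAt
          (EReal.continuous_sub_coe B').ereal_toENNReal.continuousAt (by simp)
    _ = ((⨅ k, ∫⁻ ω, (g k ω - B').toENNReal ∂μ : ℝ≥0∞) : EReal) + B' := by
        rw [lintegral_iInf (fun k => measurable_toENNReal_sub_coe (hg k) B')
          (fun k l hkl ω => EReal.monotone_toENNReal_sub_coe B' (hanti hkl ω)) hfin]
    _ = ⨅ k, ((∫⁻ ω, (g k ω - B').toENNReal ∂μ : ℝ≥0∞) : EReal) + B' :=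
        (EReal.monotone_coe_ennreal_add_coe B').map_iInf_of_continuousAt
          (EReal.continuous_coe_ennreal_add_coe B').continuousAt (by simp)

lemma integralE_le_upperInt {f g : Path X → EReal} (h : ∀ ω, g ω ≤ f ω) :
    integralE μ g ≤ upperInt μ f :=
  le_sInf fun _ ⟨_, _, _, hfg', ha⟩ => ha ▸ integralE_mono fun ω => (h ω).trans (hfg' ω)

lemma upperInt_eq_iInf_integralE_sup {f : Path X → EReal} (hf : Measurable f) :
    upperInt μ f = ⨅ c : ℝ, integralE μ fun ω => f ω ⊔ c := by
  refine le_antisymm (le_iInf fun c => sInf_le ⟨_, hf.sup measurable_const,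
    ⟨c, fun _ => le_sup_right⟩, fun _ => le_sup_left, rfl⟩) (le_sInf ?_)
  rintro _ ⟨g, -, ⟨B, hB⟩, hfg, rfl⟩
  exact (iInf_le _ B).trans (integralE_mono fun ω => sup_le (hfg ω) (hB ω))

lemma le_upperInt_of_antitone [IsProbabilityMeasure μ] {g : ℕ → Path X → EReal}
    {f : Path X → EReal} (hg : ∀ k, Measurable (g k)) (hanti : Antitone g) {C : ℝ}
    (hC : ∀ ω, g 0 ω ≤ C) (hf : ∀ ω, f ω = ⨅ k, g k ω) {a : EReal}
    (ha : ∀ k, a ≤ integralE μ (g k)) : a ≤ upperInt μ f := by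
  rw [upperInt_eq_iInf_integralE_sup (funext hf ▸ Measurable.iInf hg)]
  refine le_iInf fun c => ?_
  have hcut : (fun ω => f ω ⊔ (c : EReal)) = fun ω => ⨅ k, (g k ω ⊔ (c : EReal)) :=
    funext fun ω => by rw [hf, iInf_sup_eq]
  rw [hcut, integralE_iInf (g := fun k ω => g k ω ⊔ (c : EReal))
    (fun k => (hg k).sup measurable_const)
    (fun k l hkl ω => sup_le_sup_right (hanti hkl ω) _) (B := c) (fun _ _ => le_sup_right)
    (C := max C c) fun ω => sup_le ((hC ω).trans (EReal.coe_le_coe_iff.mpr (le_max_left _ _)))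
      (EReal.coe_le_coe_iff.mpr (le_max_right _ _))]
  exact le_iInf fun k => (ha k).trans (integralE_mono fun ω => le_sup_left)

end Integral

section GameTheoretic

variable {X : Type} [Fintype X] [Nonempty X] {Q : UpperExpTree X} {s : List X}

lemma gtG_mono {f g : Path X → ℝ} (h : ∀ ω, f ω ≤ g ω) : gtG Q f s ≤ gtG Q g s :=
  sInf_le_sInf fun _ ⟨M, hM, hB, hdom, ha⟩ =>
    ⟨M, hM, hB, fun ω hω => (EReal.coe_le_coe_iff.mpr (h ω)).trans (hdom ω hω), ha⟩

lemma gtG_le_of_isSupermart {M : List X → ℝ} (hM : IsSupermart Q M) {B : ℝ} (hB : ∀ t, B ≤ M t)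
    {h : Path X → ℝ}
    (hdom : ∀ ω ∈ cyl s, (h ω : EReal) ≤ liminf (fun k => (M (prefixList ω k) : EReal)) atTop) :
    gtG Q h s ≤ M s :=
  sInf_le ⟨M, hM, ⟨B, hB⟩, hdom, rfl⟩

lemma gtG_le_finVal {u : List X → ℝ} {n : ℕ} {B : ℝ} (hB : ∀ ω, B ≤ u (prefixList ω n)) :
    gtG Q (fun ω => u (prefixList ω n)) s ≤ finVal Q.Q u n s :=
  gtG_le_of_isSupermart (isSupermart_finVal Q u n) (Q.isLocalModel.le_finVal_of_forall hB)
    fun ω _ => le_liminf_finVal u n ω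

lemma gtUE_le_finVal {f : Path X → EReal} {u : List X → ℝ} {n : ℕ} {B : ℝ}
    (hB : ∀ ω, B ≤ u (prefixList ω n)) (hf : ∀ ω, f ω ≤ u (prefixList ω n)) :
    gtUE Q f s ≤ finVal Q.Q u n s := by
  refine (iInf_le _ B).trans (iSup_le fun c => (gtG_mono fun ω => ?_).trans (gtG_le_finVal hB))
  have hlow : ((min B c : ℝ) : EReal) ≤ (f ω ⊔ B) ⊓ c :=
    le_inf (le_sup_of_le_right (EReal.coe_le_coe_iff.mpr (min_le_left _ _)))
      (EReal.coe_le_coe_iff.mpr (min_le_right _ _))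
  simpa using EReal.toReal_le_toReal (inf_le_left.trans (sup_le (hf ω)
    (EReal.coe_le_coe_iff.mpr (hB ω)))) (ne_bot_of_le_ne_bot (EReal.coe_ne_bot _) hlow)
    (EReal.coe_ne_top _)

lemma IsSupermart.ciSup {M : ℕ → List X → ℝ} (hM : ∀ k, IsSupermart Q (M k))
    (hmono : ∀ t, Monotone fun k => M k t) (hbdd : ∀ t, BddAbove (Set.range fun k => M k t)) :
    IsSupermart Q fun t => ⨆ k, M k t := by
  intro t
  refine le_of_forall_pos_le_add fun ε hε => ?_
  choose k hk using fun x => exists_lt_of_lt_ciSup (sub_lt_self (⨆ k, M k (t ++ [x])) hε)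
  set K := Finset.univ.sup k
  have hK : ∀ x, ⨆ k, M k (t ++ [x]) ≤ M K (t ++ [x]) + ε := fun x => by
    linarith [hk x, hmono (t ++ [x]) (Finset.le_sup (f := k) (Finset.mem_univ x))]
  calc Q.Q t (fun x => ⨆ k, M k (t ++ [x]))
      ≤ Q.Q t (fun x => M K (t ++ [x]) + ε) := Q.Q_mono t hK
    _ ≤ Q.Q t (fun x => M K (t ++ [x])) + ε := Q.Q_add_const_le t _ ε
    _ ≤ (⨆ k, M k t) + ε := by linarith [hM K t, le_ciSup (hbdd t) K]

/-- The supremum of the canonical supermartingales `finVal Q.Q (u k) (n k)` is again a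
supermartingale, and it dominates the limit of the gambles. -/
lemma gtG_le_iSup_finVal {u : ℕ → List X → ℝ} {n : ℕ → ℕ} {a b : ℝ}
    (hmono : ∀ k ω, u k (prefixList ω (n k)) ≤ u (k + 1) (prefixList ω (n (k + 1))))
    (ha : ∀ k ω, a ≤ u k (prefixList ω (n k))) (hb : ∀ k ω, u k (prefixList ω (n k)) ≤ b)
    {h : Path X → ℝ} (hh : ∀ ω, (h ω : EReal) = ⨆ k, (u k (prefixList ω (n k)) : EReal)) :
    gtG Q h s ≤ ⨆ k, (finVal Q.Q (u k) (n k) s : EReal) := by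
  have hmono' : ∀ t, Monotone fun k => finVal Q.Q (u k) (n k) t := fun t =>
    monotone_nat_of_le_succ fun k => Q.isLocalModel.finVal_mono (hmono k) t
  have hbdd : ∀ t, BddAbove (Set.range fun k => finVal Q.Q (u k) (n k) t) := fun t =>
    ⟨b, by rintro _ ⟨k, rfl⟩; exact Q.isLocalModel.finVal_le_of_forall (hb k) t⟩
  refine (gtG_le_of_isSupermart (IsSupermart.ciSup (fun k => isSupermart_finVal Q _ _) hmono' hbdd)
    (B := a) (fun t => (Q.isLocalModel.le_finVal_of_forall (ha 0) t).trans (le_ciSup (hbdd t) 0))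
    fun ω _ => ?_).trans_eq ?_
  · rw [hh]
    refine iSup_le fun k => (le_liminf_finVal (E := Q.Q) (u k) (n k) ω).trans (liminf_le_liminf ?_)
    exact .of_forall fun j => EReal.coe_le_coe_iff.mpr (le_ciSup (hbdd _) k)
  · exact Monotone.map_ciSup_of_continuousAt continuous_coe_real_ereal.continuousAt
      EReal.coe_strictMono.monotone (hbdd s)

end GameTheoretic

section MeasureVsGame

variable {X : Type} [Fintype X] [Nonempty X] [DecidableEq X] {P : ImpreciseTree X}
  {Q : UpperExpTree X} {p : PreciseTree X} {s : List X} {μ : Measure (Path X)}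

/-- Fatou's lemma and the supermartingale property under the compatible tree `p`. -/
lemma integralE_le_of_isSupermart (hagree : Agree P Q) (hp : Compatible p P)
    (hμ : IsTreeMeasure p s μ) {M : List X → ℝ} (hM : IsSupermart Q M) {B : ℝ}
    (hB : ∀ t, B ≤ M t) {h : Path X → ℝ}
    (hdom : ∀ ω ∈ cyl s, (h ω : EReal) ≤ liminf (fun k => (M (prefixList ω k) : EReal)) atTop) :
    integralE μ (fun ω => (h ω : EReal)) ≤ M s := by
  have := hμ.1
  have hcyl : ∀ᵐ ω ∂μ, ω ∈ cyl s := by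
    rw [ae_iff, ← Set.compl_def, prob_compl_eq_zero_iff (measurableSet_cyl s), hμ.2,
      cylProb_self, ENNReal.ofReal_one]
  calc integralE μ (fun ω => (h ω : EReal))
      ≤ integralE μ (fun ω => liminf (fun k => (M (prefixList ω k) : EReal)) atTop) :=
        integralE_mono_ae (hcyl.mono hdom)
    _ ≤ liminf (fun k => integralE μ (fun ω => (M (prefixList ω k) : EReal))) atTop :=
        integralE_liminf_le (fun k => measurable_comp_prefixList (fun t => (M t : EReal)) k)
          fun k ω => EReal.coe_le_coe_iff.mpr (hB _)
    _ ≤ M s := by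
      refine liminf_le_of_frequently_le' ((eventually_ge_atTop s.length).frequently.mono
        fun k hk => ?_)
      rw [integralE_finitary hμ]
      exact EReal.coe_le_coe_iff.mpr (p.isLocalModel.finVal_le_of_supermart
        (fun t => (hagree.exp_le hp t _).trans (hM t)) hk)

lemma integralE_le_gtG (hagree : Agree P Q) (hp : Compatible p P) (hμ : IsTreeMeasure p s μ)
    (h : Path X → ℝ) : integralE μ (fun ω => (h ω : EReal)) ≤ gtG Q h s :=
  le_sInf fun _ ⟨_, hM, ⟨_, hB⟩, hdom, ha⟩ =>
    ha ▸ integralE_le_of_isSupermart hagree hp hμ hM hB hdom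

end MeasureVsGame

section Compactness

variable {X : Type} [Fintype X]

lemma exists_tendsto_compatible (P : ImpreciseTree X) {q : ℕ → PreciseTree X}
    (hq : ∀ j, Compatible (q j) P) :
    ∃ p : PreciseTree X, Compatible p P ∧ ∃ φ : ℕ → ℕ, StrictMono φ ∧
      ∀ t x, Tendsto (fun j => (q (φ j)).p t x) atTop (𝓝 (p.p t x)) := by
  have hcompact : ∀ t, IsCompact (P.sets t) := fun t =>
    (isCompact_univ_pi fun _ : X => isCompact_Icc (a := (0 : ℝ)) (b := 1)).of_isClosed_subset
      (P.closed' t) fun r hr x _ => ⟨(P.prob' t r hr).1 x, (P.prob' t r hr).2 ▸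
        Finset.single_le_sum (fun y _ => (P.prob' t r hr).1 y) (Finset.mem_univ x)⟩
  obtain ⟨a, ha, φ, hφ, hconv⟩ := (isCompact_univ_pi hcompact).tendsto_subseq
    (x := fun j => (q j).p) fun j t _ => hq j t
  have hamem : ∀ t, a t ∈ P.sets t := fun t => ha t (Set.mem_univ t)
  exact ⟨⟨a, fun t => (P.prob' t _ (hamem t)).1, fun t => (P.prob' t _ (hamem t)).2⟩, hamem, φ, hφ,
    fun t x => tendsto_pi_nhds.mp (tendsto_pi_nhds.mp hconv t) x⟩

lemma tendsto_backward_exp {q : ℕ → PreciseTree X} {p : PreciseTree X}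
    (h : ∀ t x, Tendsto (fun j => (q j).p t x) atTop (𝓝 (p.p t x))) (u : List X → ℝ) :
    ∀ m t, Tendsto (fun j => backward (q j).exp u m t) atTop (𝓝 (backward p.exp u m t))
  | 0, _ => tendsto_const_nhds
  | m + 1, t => tendsto_finsetSum _ fun x _ => (tendsto_backward_exp h u m (t ++ [x])).mul (h t x)

end Compactness

section Main

variable {X : Type} [Fintype X] [Nonempty X] [DecidableEq X] {P : ImpreciseTree X}
  {Q : UpperExpTree X} {Pm : PreciseTree X → List X → Measure (Path X)}

lemma muUE_le_gtUE (hagree : Agree P Q) (hPm : ∀ p s, IsTreeMeasure p s (Pm p s))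
    {f : Path X → EReal} (hf : Measurable f) (s : List X) : muUE Pm P f s ≤ gtUE Q f s := by
  refine iSup₂_le fun p hp => le_iInf fun c => ?_
  have := (hPm p s).1
  set cut : ℕ → Path X → EReal := fun m ω => (f ω ⊔ c) ⊓ ((c + m : ℝ) : EReal)
  have hlow : ∀ m ω, (c : EReal) ≤ cut m ω := fun m ω =>
    le_inf le_sup_right (EReal.coe_le_coe_iff.mpr (by linarith [m.cast_nonneg (α := ℝ)]))
  have hcoe : ∀ m, (fun ω => ((cut m ω).toReal : EReal)) = cut m := fun m => funext fun ω =>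
    EReal.coe_toReal (ne_top_of_le_ne_top (EReal.coe_ne_top _) inf_le_right)
      (ne_bot_of_le_ne_bot (EReal.coe_ne_bot c) (hlow m ω))
  have hlim : ∀ ω, liminf (fun m => cut m ω) atTop = f ω ⊔ c := fun ω =>
    ((tendsto_const_nhds.min (EReal.tendsto_coe_atTop.comp
      (tendsto_atTop_add_const_left _ c tendsto_natCast_atTop_atTop))).liminf_eq).trans
      (min_top_right _)
  calc upperInt (Pm p s) f ≤ integralE (Pm p s) fun ω => f ω ⊔ c :=
        (upperInt_eq_iInf_integralE_sup hf).trans_le (iInf_le _ c)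
    _ = integralE (Pm p s) fun ω => liminf (fun m => cut m ω) atTop := by simp_rw [hlim]
    _ ≤ liminf (fun m => integralE (Pm p s) (cut m)) atTop :=
        integralE_liminf_le (fun m => (hf.sup measurable_const).inf measurable_const) hlow
    _ ≤ gtBB Q (fun ω => f ω ⊔ c) s := liminf_le_of_frequently_le' <| .of_forall fun m => by
        rw [← hcoe m]
        exact (integralE_le_gtG hagree hp (hPm p s) _).trans
          (le_iSup (fun c' : ℝ => gtG Q (fun ω => ((f ω ⊔ c) ⊓ c').toReal) s) (c + m))

lemma finVal_le_muUE (hagree : Agree P Q) (hPm : ∀ p s, IsTreeMeasure p s (Pm p s))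
    {f : Path X → EReal} {u : List X → ℝ} {n : ℕ} (hf : ∀ ω, (u (prefixList ω n) : EReal) ≤ f ω)
    (s : List X) : (finVal Q.Q u n s : EReal) ≤ muUE Pm P f s := by
  refine EReal.ge_of_forall_gt_iff_ge.mp fun z hz => ?_
  obtain ⟨p, hp, hle⟩ :=
    hagree.exists_compatible_finVal_le u n s (sub_pos.mpr (EReal.coe_lt_coe_iff.mp hz))
  calc (z : EReal) ≤ finVal p.exp u n s := EReal.coe_le_coe_iff.mpr (by linarith)
    _ = integralE (Pm p s) fun ω => (u (prefixList ω n) : EReal) :=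
        (integralE_finitary (hPm p s) u n).symm
    _ ≤ upperInt (Pm p s) f := integralE_le_upperInt hf
    _ ≤ muUE Pm P f s := le_iSup₂ (f := fun p (_ : Compatible p P) => upperInt (Pm p s) f) p hp

lemma gtUE_le_muUE_of_monotone (hagree : Agree P Q) (hPm : ∀ p s, IsTreeMeasure p s (Pm p s))
    {fn : ℕ → Path X → EReal} {n : ℕ → ℕ} {u : ℕ → List X → ℝ}
    (hu : ∀ k ω, fn k ω = u k (prefixList ω (n k))) (hmono : Monotone fn) {B : ℝ}
    (hB : ∀ ω, (B : EReal) ≤ fn 0 ω) {f : Path X → EReal} (hf : ∀ ω, f ω = ⨆ k, fn k ω)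
    (s : List X) : gtUE Q f s ≤ muUE Pm P f s := by
  have hle : ∀ {k l} ω, k ≤ l → u k (prefixList ω (n k)) ≤ u l (prefixList ω (n l)) :=
    fun ω hkl => EReal.coe_le_coe_iff.mp (by rw [← hu, ← hu]; exact hmono hkl ω)
  have hBu : ∀ k ω, B ≤ u k (prefixList ω (n k)) := fun k ω =>
    EReal.coe_le_coe_iff.mp ((hu 0 ω ▸ hB ω).trans (EReal.coe_le_coe_iff.mpr (hle ω k.zero_le)))
  have hfB : ∀ ω, (B : EReal) ≤ f ω := fun ω =>
    (hB ω).trans (hf ω ▸ le_iSup (fun k => fn k ω) 0)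
  refine (iInf_le _ B).trans (iSup_le fun c => ?_)
  have hcut : ∀ ω, (((f ω ⊔ B) ⊓ c).toReal : EReal) =
      ⨆ k, ((min (u k (prefixList ω (n k))) c : ℝ) : EReal) := fun ω => by
    rw [sup_eq_left.mpr (hfB ω), EReal.coe_toReal (ne_top_of_le_ne_top (EReal.coe_ne_top c)
      inf_le_right) (ne_bot_of_le_ne_bot (EReal.coe_ne_bot (min B c))
        (le_inf ((EReal.coe_le_coe_iff.mpr (min_le_left _ _)).trans (hfB ω))
          (EReal.coe_le_coe_iff.mpr (min_le_right _ _)))), hf, iSup_inf_eq]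
    refine iSup_congr fun k => ?_
    rw [hu, EReal.coe_strictMono.monotone.map_min]
  refine (gtG_le_iSup_finVal (u := fun k r => min (u k r) c) (n := n) (a := min B c) (b := c)
    (fun k ω => min_le_min_right c (hle ω k.le_succ))
    (fun k ω => min_le_min_right c (hBu k ω)) (fun k ω => min_le_right _ _) hcut).trans
    (iSup_le fun k => finVal_le_muUE hagree hPm (fun ω => ?_) s)
  rw [hf]
  exact (EReal.coe_le_coe_iff.mpr (min_le_left _ _)).trans (hu k ω ▸ le_iSup (fun k => fn k ω) k)

/-- The minimax exchange `⨅ₖ sup_p E_p(fₖ) ≤ sup_p ⨅ₖ E_p(fₖ)` behind downward continuity: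
trees that are nearly optimal for `fₖ` accumulate, by compactness of the credal sets, at a
compatible tree that is nearly optimal for every `fₖ` simultaneously. -/
lemma gtUE_le_muUE_of_antitone (hagree : Agree P Q) (hPm : ∀ p s, IsTreeMeasure p s (Pm p s))
    {fn : ℕ → Path X → EReal} {n : ℕ → ℕ} {u : ℕ → List X → ℝ}
    (hu : ∀ k ω, fn k ω = u k (prefixList ω (n k))) (hanti : Antitone fn) {B : ℕ → ℝ}
    (hB : ∀ k ω, (B k : EReal) ≤ fn k ω) {C : ℝ} (hC : ∀ ω, fn 0 ω ≤ C) {f : Path X → EReal}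
    (hf : ∀ ω, f ω = ⨅ k, fn k ω) (s : List X) : gtUE Q f s ≤ muUE Pm P f s := by
  have hle : ∀ {k l} ω, k ≤ l → u l (prefixList ω (n l)) ≤ u k (prefixList ω (n k)) :=
    fun ω hkl => EReal.coe_le_coe_iff.mp (by rw [← hu, ← hu]; exact hanti hkl ω)
  refine (le_iInf fun k => gtUE_le_finVal (s := s) (fun ω => EReal.coe_le_coe_iff.mp
    (hu k ω ▸ hB k ω)) fun ω => hf ω ▸ hu k ω ▸ iInf_le _ k).trans
    (EReal.ge_of_forall_gt_iff_ge.mp fun z hz => ?_)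
  have hzk : ∀ k, z < finVal Q.Q (u k) (n k) s := fun k =>
    EReal.coe_lt_coe_iff.mp (hz.trans_le (iInf_le _ k))
  choose q hq hqle using fun k =>
    hagree.exists_compatible_finVal_le (u k) (n k) s (sub_pos.mpr (hzk k))
  obtain ⟨p, hp, φ, hφ, hlim⟩ := exists_tendsto_compatible P hq
  have := (hPm p s).1
  have hfn : ∀ k, fn k = fun ω => (u k (prefixList ω (n k)) : EReal) := fun k => funext (hu k)
  have hzp : ∀ m, (z : EReal) ≤ integralE (Pm p s) (fn m) := fun m => by
    rw [hfn, integralE_finitary (hPm p s)]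
    refine EReal.coe_le_coe_iff.mpr (ge_of_tendsto (tendsto_backward_exp hlim _ _ s) ?_)
    filter_upwards [hφ.tendsto_atTop.eventually_ge_atTop m] with j hj
    calc z ≤ finVal (q (φ j)).exp (u (φ j)) (n (φ j)) s := by linarith [hqle (φ j)]
      _ ≤ finVal (q (φ j)).exp (u m) (n m) s :=
        (q (φ j)).isLocalModel.finVal_mono (fun ω => hle ω hj) s
  exact (le_upperInt_of_antitone
    (fun k => hfn k ▸ measurable_comp_prefixList (fun t => (u k t : EReal)) (n k)) hanti hC hf
    hzp).trans (le_iSup₂ (f := fun p (_ : Compatible p P) => upperInt (Pm p s) f) p hp)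

end Main

variable {X : Type} [Fintype X] [Nonempty X] [DecidableEq X]

theorem stmt8 (P : ImpreciseTree X) (Q : UpperExpTree X)
    (Pm : PreciseTree X → List X → Measure (Path X))
    (hPm : ∀ (p : PreciseTree X) (s : List X), IsTreeMeasure p s (Pm p s))
    (hagree : Agree P Q) (s : List X) (f : Path X → EReal)
    (h : ∃ fn : ℕ → Path X → EReal, (∀ n, IsFinGamble (fn n)) ∧
      (Monotone fn ∨ Antitone fn) ∧
      ∀ ω, Tendsto (fun n => fn n ω) atTop (nhds (f ω))) :
    muUE Pm P f s = gtUE Q f s := by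
  obtain ⟨fn, hfin, hmo, hlim⟩ := h
  choose n u hu using fun k => (hfin k).exists_eq_comp_prefixList
  choose B hB using fun k => (hfin k).2
  have hBlow : ∀ k ω, ((-B k : ℝ) : EReal) ≤ fn k ω := fun k ω => by simpa using (hB k ω).1
  have hmeas : Measurable f := (funext fun ω => (hlim ω).liminf_eq) ▸
    Measurable.liminf fun k =>
      funext (hu k) ▸ measurable_comp_prefixList (fun t => (u k t : EReal)) (n k)
  refine le_antisymm (muUE_le_gtUE hagree hPm hmeas s) ?_
  rcases hmo with hmono | hanti
  · exact gtUE_le_muUE_of_monotone hagree hPm hu hmono (hBlow 0)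
      (fun ω => tendsto_nhds_unique (hlim ω) (tendsto_atTop_iSup fun _ _ hkl => hmono hkl ω)) s
  · exact gtUE_le_muUE_of_antitone hagree hPm hu hanti hBlow (fun ω => (hB 0 ω).2)
      (fun ω => tendsto_nhds_unique (hlim ω) (tendsto_atTop_iInf fun _ _ hkl => hanti hkl ω)) s

end UEPaper
end

section
/- Every ℱ-measurable function f: Ω → [0,∞] is universally capacitable: for every Ω-capacity F, F(f) = sup{F(g) : g: Ω → [0,∞) upper semicontinuous, g ≤ f}. -/
open Filter MeasureTheory Topology
open scoped ENNReal

namespace UEPaper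

variable {X : Type} [Fintype X] [Nonempty X] [DecidableEq X]

/-!
Choquet's capacitability argument, transported from sets to functions.

For sets: if `A = range u` with `u : (ℕ → ℕ) → Y` continuous and `a < I A`, continuity of `I`
along increasing sequences lets one choose bounds `m 0, m 1, …` one coordinate at a time so that
`a < I (u '' {σ | ∀ i < k, σ i ≤ m i})` for every `k`. The closures of these images are compact
and decrease to a subset of the compact set `u '' Iic m ⊆ A`, so continuity along decreasing
sequences of compact sets gives `a ≤ I (u '' Iic m)`.

For functions: a set `A ⊆ Ω × ℝ` is sent to its upper envelope `ω ↦ sup ({0} ∪ A_ω)`. Envelopes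
of compact sets are finite and upper semicontinuous, and the envelope turns increasing unions and
decreasing intersections of compact sets into pointwise suprema and infima, so `A ↦ F (envelope A)`
is a capacity on sets. The truncation `f ⊓ n` is the envelope of its hypograph, a Borel, hence
analytic, subset of the compact set `Ω × [0, n]`; here `Ω = ℕ → 𝒳` is compact Polish and its
cylinder σ-algebra is the Borel one.
-/

open Set

section Choquet

theorem isCompact_Iic_nat (m : ℕ → ℕ) : IsCompact (Iic m) := by
  rw [← pi_univ_Iic]
  exact isCompact_univ_pi fun i => (finite_Iic (m i)).isCompact

theorem exists_forall_lt_le_subset_of_Iic_subset {m : ℕ → ℕ} {W : Set (ℕ → ℕ)}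
    (hW : IsOpen W) (hmW : Iic m ⊆ W) : ∃ k, {σ | ∀ i < k, σ i ≤ m i} ⊆ W := by
  set O : ℕ → Set (ℕ → ℕ) := fun k => {τ | PiNat.cylinder τ k ⊆ W}
  have hO_open : ∀ k, IsOpen (O k) := fun k => isOpen_iff_forall_mem_open.2 fun τ hτ => by
    refine ⟨PiNat.cylinder τ k, fun τ' hτ' => ?_, PiNat.isOpen_cylinder _ τ k,
      PiNat.self_mem_cylinder τ k⟩
    change PiNat.cylinder τ' k ⊆ W
    rwa [PiNat.mem_cylinder_iff_eq.1 hτ']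
  have hO_mono : Monotone O := fun k l hkl τ hτ => (PiNat.cylinder_anti τ hkl).trans hτ
  have hW_cover : W ⊆ ⋃ k, O k := fun τ hτ => by
    obtain ⟨-, ⟨x, k, rfl⟩, hτx, hxW⟩ :=
      (PiNat.isTopologicalBasis_cylinders _).exists_subset_of_mem_open hτ hW
    refine mem_iUnion.2 ⟨k, ?_⟩
    change PiNat.cylinder τ k ⊆ W
    rwa [PiNat.mem_cylinder_iff_eq.1 hτx]
  obtain ⟨k, hk⟩ := (isCompact_Iic_nat m).elim_directed_cover O hO_open (hmW.trans hW_cover)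
    hO_mono.directed_le
  -- `σ` agrees with `σ ⊓ m ∈ Iic m` on the first `k` coordinates
  refine ⟨k, fun σ hσ => hk (inf_le_right : σ ⊓ m ≤ m) fun i hi => ?_⟩
  exact (inf_eq_left.2 (hσ i hi)).symm

theorem iInter_closure_image_subset_image_Iic {Y : Type*} [TopologicalSpace Y] [T2Space Y]
    {u : (ℕ → ℕ) → Y} (hu : Continuous u) (m : ℕ → ℕ) :
    ⋂ k, closure (u '' {σ | ∀ i < k, σ i ≤ m i}) ⊆ u '' Iic m := by
  intro x hx
  by_contra hxm
  obtain ⟨U, V, hU, hV, hmU, hxV, hUV⟩ := SeparatedNhds.of_isCompact_isCompact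
    ((isCompact_Iic_nat m).image hu) isCompact_singleton (disjoint_singleton_right.2 hxm)
  obtain ⟨k, hk⟩ := exists_forall_lt_le_subset_of_Iic_subset (hU.preimage hu)
    (image_subset_iff.1 hmU)
  have hcl : closure (u '' {σ | ∀ i < k, σ i ≤ m i}) ⊆ Vᶜ :=
    closure_minimal ((image_subset_iff.2 hk).trans hUV.subset_compl_right) hV.isClosed_compl
  exact hcl (mem_iInter.1 hx k) (hxV rfl)

theorem exists_forall_lt_image_of_lt_range {Y β : Type*} [LinearOrder β] [TopologicalSpace β]
    [OrderClosedTopology β] {I : Set Y → β}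
    (hup : ∀ B : ℕ → Set Y, Monotone B → Tendsto (fun n => I (B n)) atTop (𝓝 (I (⋃ n, B n))))
    {u : (ℕ → ℕ) → Y} {a : β} (ha : a < I (range u)) :
    ∃ m : ℕ → ℕ, ∀ k, a < I (u '' {σ | ∀ i < k, σ i ≤ m i}) := by
  have step : ∀ (S : Set (ℕ → ℕ)) (k : ℕ), ∃ j,
      a < I (u '' S) → a < I (u '' (S ∩ {σ | σ k ≤ j})) := by
    intro S k
    by_cases hS : a < I (u '' S)
    · have hunion : ⋃ j, u '' (S ∩ {σ | σ k ≤ j}) = u '' S := by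
        rw [← image_iUnion, ← inter_iUnion, iUnion_eq_univ_iff.2 fun σ => ⟨σ k, le_refl (σ k)⟩,
          inter_univ]
      have hlim := hup (fun j => u '' (S ∩ {σ | σ k ≤ j}))
        fun j j' hjj' => image_mono (inter_subset_inter_right _ fun σ hσ => le_trans hσ hjj')
      rw [hunion] at hlim
      obtain ⟨j, hj⟩ := (hlim.eventually_const_lt hS).exists
      exact ⟨j, fun _ => hj⟩
    · exact ⟨0, fun h => absurd h hS⟩
  choose g hg using step
  let T : ℕ → Set (ℕ → ℕ) := fun k => k.rec univ fun k Tk => Tk ∩ {σ | σ k ≤ g Tk k}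
  have hT_gt : ∀ k, a < I (u '' T k) := by
    intro k
    induction k with
    | zero => simpa [T] using ha
    | succ k ih => exact hg _ _ ih
  have hT_eq : ∀ k, T k = {σ | ∀ i < k, σ i ≤ g (T i) i} := by
    intro k
    induction k with
    | zero => simp [T]
    | succ k ih =>
      ext σ
      change σ ∈ T k ∧ σ k ≤ g (T k) k ↔ ∀ i < k + 1, σ i ≤ g (T i) i
      rw [Nat.forall_lt_succ_right, ih]
      rfl
  exact ⟨fun k => g (T k) k, fun k => hT_eq k ▸ hT_gt k⟩

theorem _root_.MeasureTheory.AnalyticSet.exists_isCompact_subset_le {Y β : Type*}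
    [TopologicalSpace Y] [T2Space Y] [LinearOrder β] [TopologicalSpace β] [OrderClosedTopology β]
    {I : Set Y → β} (hmono : Monotone I)
    (hup : ∀ B : ℕ → Set Y, Monotone B → Tendsto (fun n => I (B n)) atTop (𝓝 (I (⋃ n, B n))))
    (hdown : ∀ K : ℕ → Set Y, (∀ n, IsCompact (K n)) → Antitone K →
      Tendsto (fun n => I (K n)) atTop (𝓝 (I (⋂ n, K n))))
    {A L : Set Y} (hA : AnalyticSet A) (hL : IsCompact L) (hAL : A ⊆ L) {a : β} (ha : a < I A) :
    ∃ K ⊆ A, IsCompact K ∧ a ≤ I K := by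
  rw [AnalyticSet] at hA
  rcases hA with rfl | ⟨u, hu, rfl⟩
  · exact ⟨∅, subset_rfl, isCompact_empty, ha.le⟩
  obtain ⟨m, hm⟩ := exists_forall_lt_image_of_lt_range hup ha
  set C : ℕ → Set Y := fun k => closure (u '' {σ | ∀ i < k, σ i ≤ m i})
  have hC_cpt : ∀ k, IsCompact (C k) := fun k =>
    hL.of_isClosed_subset isClosed_closure
      (closure_minimal ((image_subset_range u _).trans hAL) hL.isClosed)
  have hC_anti : Antitone C := fun k l hkl =>
    closure_mono (image_mono fun σ hσ i hi => hσ i (hi.trans_le hkl))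
  have hle : a ≤ I (⋂ k, C k) := ge_of_tendsto (hdown C hC_cpt hC_anti)
    (Eventually.of_forall fun k => (hm k).le.trans (hmono subset_closure))
  exact ⟨u '' Iic m, image_subset_range u _, (isCompact_Iic_nat m).image hu,
    hle.trans (hmono (iInter_closure_image_subset_image_Iic hu m))⟩

end Choquet

section SectionSup

variable {Ω : Type*}

noncomputable def sectionSup (A : Set (Ω × ℝ)) (ω : Ω) : EReal :=
  sSup (insert 0 (Real.toEReal '' {t | (ω, t) ∈ A}))

theorem sectionSup_nonneg (A : Set (Ω × ℝ)) (ω : Ω) : 0 ≤ sectionSup A ω :=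
  le_sSup (mem_insert _ _)

theorem le_sectionSup {A : Set (Ω × ℝ)} {ω : Ω} {t : ℝ} (h : (ω, t) ∈ A) :
    (t : EReal) ≤ sectionSup A ω :=
  le_sSup (mem_insert_of_mem _ ⟨t, h, rfl⟩)

theorem sectionSup_le {A : Set (Ω × ℝ)} {ω : Ω} {b : EReal} (h0 : 0 ≤ b)
    (h : ∀ t : ℝ, (ω, t) ∈ A → (t : EReal) ≤ b) : sectionSup A ω ≤ b :=
  sSup_le <| forall_mem_insert.2 ⟨h0, forall_mem_image.2 h⟩

theorem sectionSup_mono : Monotone (sectionSup (Ω := Ω)) := fun _ B hAB ω =>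
  sectionSup_le (sectionSup_nonneg B ω) fun _ ht => le_sectionSup (hAB ht)

theorem sectionSup_iUnion (A : ℕ → Set (Ω × ℝ)) :
    sectionSup (⋃ n, A n) = fun ω => ⨆ n, sectionSup (A n) ω := by
  ext ω
  refine le_antisymm (sectionSup_le ((sectionSup_nonneg _ _).trans (le_iSup_of_le 0 le_rfl))
    fun t ht => ?_) (iSup_le fun n => sectionSup_mono (subset_iUnion A n) ω)
  obtain ⟨n, hn⟩ := mem_iUnion.1 ht
  exact le_iSup_of_le n (le_sectionSup hn)

theorem sectionSup_hypograph {g : Ω → EReal} {ω : Ω} (hg0 : 0 ≤ g ω) (hg : g ω ≠ ⊤) :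
    sectionSup {p | 0 ≤ p.2 ∧ (p.2 : EReal) ≤ g p.1} ω = g ω := by
  refine le_antisymm (sectionSup_le hg0 fun t ht => ht.2) ?_
  have hcoe : ((g ω).toReal : EReal) = g ω :=
    EReal.coe_toReal hg (ne_bot_of_le_ne_bot (by simp) hg0)
  calc g ω = ((g ω).toReal : EReal) := hcoe.symm
    _ ≤ _ := le_sectionSup (A := {p | 0 ≤ p.2 ∧ (p.2 : EReal) ≤ g p.1})
      ⟨EReal.toReal_nonneg hg0, hcoe.le⟩

variable [TopologicalSpace Ω]

theorem exists_mem_eq_sectionSup [T1Space Ω] {K : Set (Ω × ℝ)} (hK : IsCompact K) {ω : Ω}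
    (hpos : 0 < sectionSup K ω) : ∃ t : ℝ, (ω, t) ∈ K ∧ sectionSup K ω = t := by
  have hsec : IsCompact {t | (ω, t) ∈ K} :=
    (isInducing_prodMkRight (Y := ℝ) ω).isCompact_preimage (by
      convert (isClosed_singleton (x := ω)).prod (isClosed_univ (X := ℝ))
      ext ⟨a, b⟩
      simp [eq_comm]) hK
  rcases ((hsec.image continuous_coe_real_ereal).insert 0).sSup_mem (insert_nonempty _ _) with
    h0 | ⟨t, htK, ht⟩
  · exact absurd h0 hpos.ne'
  · exact ⟨t, htK, ht.symm⟩

theorem sectionSup_lt_top [T1Space Ω] {K : Set (Ω × ℝ)} (hK : IsCompact K) (ω : Ω) :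
    sectionSup K ω < ⊤ := by
  rcases (sectionSup_nonneg K ω).lt_or_eq with hpos | hzero
  · obtain ⟨t, -, ht⟩ := exists_mem_eq_sectionSup hK hpos
    exact ht ▸ EReal.coe_lt_top t
  · exact hzero ▸ EReal.zero_lt_top

theorem upperSemicontinuous_sectionSup [T2Space Ω] {K : Set (Ω × ℝ)} (hK : IsCompact K) :
    UpperSemicontinuous (sectionSup K) := by
  refine upperSemicontinuous_iff_isClosed_preimage.2 fun y => ?_
  rcases le_or_gt y 0 with hy | hy
  · convert isClosed_univ
    exact eq_univ_of_forall fun ω => hy.trans (sectionSup_nonneg K ω)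
  have hlevel : sectionSup K ⁻¹' Ici y = Prod.fst '' (K ∩ {p | y ≤ (p.2 : EReal)}) := by
    ext ω
    refine ⟨fun hω => ?_, ?_⟩
    · obtain ⟨t, htK, ht⟩ := exists_mem_eq_sectionSup hK (hy.trans_le hω)
      exact ⟨(ω, t), ⟨htK, show y ≤ (t : EReal) from ht ▸ hω⟩, rfl⟩
    · rintro ⟨⟨ω, t⟩, ⟨htK, hyt⟩, rfl⟩
      exact hyt.trans (le_sectionSup htK)
  rw [hlevel]
  exact ((hK.inter_right (isClosed_le continuous_const
    (continuous_coe_real_ereal.comp continuous_snd))).image continuous_fst).isClosed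

theorem sectionSup_iInter [T2Space Ω] {K : ℕ → Set (Ω × ℝ)} (hK : ∀ n, IsCompact (K n))
    (hanti : Antitone K) : sectionSup (⋂ n, K n) = fun ω => ⨅ n, sectionSup (K n) ω := by
  ext ω
  refine le_antisymm (le_iInf fun n => sectionSup_mono (iInter_subset K n) ω) ?_
  set b := ⨅ n, sectionSup (K n) ω
  rcases le_or_gt b 0 with hb | hb
  · exact hb.trans (sectionSup_nonneg _ ω)
  -- a point of `⋂ n, K n` over `ω` at height `≥ b`, by compactness
  set C : ℕ → Set (Ω × ℝ) := fun n => K n ∩ {p | p.1 = ω ∧ b ≤ p.2}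
  have hC_closed : IsClosed {p : Ω × ℝ | p.1 = ω ∧ b ≤ p.2} :=
    (isClosed_singleton.preimage continuous_fst).inter
      (isClosed_le continuous_const (continuous_coe_real_ereal.comp continuous_snd))
  have hC_ne : ∀ n, (C n).Nonempty := fun n => by
    obtain ⟨t, htK, ht⟩ := exists_mem_eq_sectionSup (hK n) (hb.trans_le (iInf_le _ n))
    exact ⟨(ω, t), htK, rfl, ht ▸ iInf_le _ n⟩
  obtain ⟨⟨ω', t⟩, hmem⟩ := IsCompact.nonempty_iInter_of_sequence_nonempty_isCompact_isClosed C
    (fun n => inter_subset_inter_left _ (hanti n.le_succ)) hC_ne ((hK 0).inter_right hC_closed)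
    fun n => (hK n).isClosed.inter hC_closed
  obtain ⟨rfl, hbt⟩ := (mem_iInter.1 hmem 0).2
  exact hbt.trans (le_sectionSup (mem_iInter.2 fun n => (mem_iInter.1 hmem n).1))

end SectionSup

theorem _root_.EReal.iSup_natCast : ⨆ n : ℕ, (n : EReal) = ⊤ := by
  refine iSup_eq_top.2 fun b hb => ?_
  induction b using EReal.rec with
  | bot => exact ⟨0, bot_lt_iff_ne_bot.2 (EReal.natCast_ne_bot 0)⟩
  | coe r =>
    obtain ⟨n, hn⟩ := exists_nat_gt r
    exact ⟨n, by exact_mod_cast hn⟩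
  | top => exact absurd hb (lt_irrefl ⊤)

theorem _root_.EReal.iSup_inf_natCast (x : EReal) : ⨆ n : ℕ, x ⊓ (n : EReal) = x := by
  rw [← inf_iSup_eq, EReal.iSup_natCast, inf_top_eq]

theorem exists_upperSemicontinuous_le_capacity {Ω : Type*} [TopologicalSpace Ω] [PolishSpace Ω]
    [CompactSpace Ω] [MeasurableSpace Ω] [BorelSpace Ω] {F : (Ω → EReal) → EReal}
    (hmono : ∀ f g : Ω → EReal, (∀ ω, 0 ≤ f ω) → (∀ ω, 0 ≤ g ω) → (∀ ω, f ω ≤ g ω) → F f ≤ F g)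
    (hup : ∀ fn : ℕ → Ω → EReal, (∀ n ω, 0 ≤ fn n ω) → Monotone fn →
      Tendsto (fun n => F (fn n)) atTop (𝓝 (F fun ω => ⨆ n, fn n ω)))
    (hdown : ∀ fn : ℕ → Ω → EReal, (∀ n ω, 0 ≤ fn n ω ∧ fn n ω < ⊤) →
      (∀ n, UpperSemicontinuous (fn n)) → Antitone fn →
      Tendsto (fun n => F (fn n)) atTop (𝓝 (F fun ω => ⨅ n, fn n ω)))
    {f : Ω → EReal} (hf0 : ∀ ω, 0 ≤ f ω) (hf : Measurable f) {a : EReal} (ha : a < F f) :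
    ∃ g : Ω → EReal, UpperSemicontinuous g ∧ (∀ ω, 0 ≤ g ω ∧ g ω < ⊤) ∧ (∀ ω, g ω ≤ f ω) ∧
      a ≤ F g := by
  obtain ⟨n, hn⟩ : ∃ n : ℕ, a < F fun ω => f ω ⊓ n := by
    have hlim := hup (fun n ω => f ω ⊓ n) (fun n ω => le_inf (hf0 ω) (Nat.cast_nonneg' n))
      fun n m hnm ω => inf_le_inf_left _ (Nat.mono_cast hnm)
    simp only [EReal.iSup_inf_natCast] at hlim
    exact (hlim.eventually_const_lt ha).exists
  set S := {p : Ω × ℝ | 0 ≤ p.2 ∧ (p.2 : EReal) ≤ f p.1 ⊓ n}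
  have hS_env : sectionSup S = fun ω => f ω ⊓ n := funext fun ω =>
    sectionSup_hypograph (le_inf (hf0 ω) (Nat.cast_nonneg' n))
      (ne_top_of_le_ne_top (EReal.natCast_ne_top n) inf_le_right)
  have hS_meas : MeasurableSet S :=
    (measurableSet_le measurable_const measurable_snd).inter <|
      measurableSet_le (measurable_coe_real_ereal.comp measurable_snd)
        ((hf.comp measurable_fst).inf measurable_const)
  have hS_sub : S ⊆ univ ×ˢ Icc 0 (n : ℝ) := fun p hp =>
    ⟨trivial, hp.1, by exact_mod_cast hp.2.trans inf_le_right⟩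
  obtain ⟨K, hKS, hK, haK⟩ := hS_meas.analyticSet.exists_isCompact_subset_le
    (I := fun A => F (sectionSup A))
    (fun A B hAB => hmono _ _ (sectionSup_nonneg A) (sectionSup_nonneg B) (sectionSup_mono hAB))
    (fun B hB => sectionSup_iUnion B ▸ hup _ (fun n => sectionSup_nonneg (B n))
      fun n m hnm => sectionSup_mono (hB hnm))
    (fun K hK hanti => sectionSup_iInter hK hanti ▸ hdown _
      (fun n ω => ⟨sectionSup_nonneg _ ω, sectionSup_lt_top (hK n) ω⟩)
      (fun n => upperSemicontinuous_sectionSup (hK n)) fun n m hnm => sectionSup_mono (hanti hnm))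
    (isCompact_univ.prod isCompact_Icc) hS_sub (hS_env ▸ hn)
  refine ⟨sectionSup K, upperSemicontinuous_sectionSup hK,
    fun ω => ⟨sectionSup_nonneg K ω, sectionSup_lt_top hK ω⟩, fun ω => ?_, haK⟩
  calc sectionSup K ω ≤ sectionSup S ω := sectionSup_mono hKS ω
    _ = f ω ⊓ n := by rw [hS_env]
    _ ≤ f ω := inf_le_left

section PathSpace

variable {E : Type}

theorem cyl_prefixList (ω : Path E) (k : ℕ) : cyl (prefixList ω k) = PiNat.cylinder ω k := by
  ext ω'
  simp [cyl, prefixList, List.map_inj_left, PiNat.cylinder]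

theorem exists_prefixList_eq [Nonempty E] (s : List E) : ∃ ω : Path E, prefixList ω s.length = s :=
  ⟨fun i => s.getD i (Classical.arbitrary E),
    List.ext_getElem (by simp [prefixList]) fun i _ h => by simp [prefixList, h]⟩

variable [TopologicalSpace E] [DiscreteTopology E]

theorem cylSigma_eq_borel [Countable E] [Nonempty E] :
    (cylSigma : MeasurableSpace (Path E)) = borel (Path E) := by
  rw [(PiNat.isTopologicalBasis_cylinders fun _ => E).borel_eq_generateFrom]
  refine congrArg MeasurableSpace.generateFrom (Set.ext fun A => ⟨?_, ?_⟩)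
  · rintro ⟨s, rfl⟩
    obtain ⟨ω, hω⟩ := exists_prefixList_eq s
    exact ⟨ω, s.length, by rw [← cyl_prefixList, hω]⟩
  · rintro ⟨ω, k, rfl⟩
    exact ⟨prefixList ω k, (cyl_prefixList ω k).symm⟩

instance [Countable E] [Nonempty E] : BorelSpace (Path E) :=
  ⟨cylSigma_eq_borel⟩

theorem USC.of_upperSemicontinuous {g : Path E → EReal} (hg : UpperSemicontinuous g) : USC g :=
  fun a => hg.isOpen_preimage a

end PathSpace

theorem stmt12 [TopologicalSpace X] [DiscreteTopology X]
    (f : Path X → EReal) (hf0 : ∀ ω, 0 ≤ f ω) (hmeas : Measurable f) :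
    ∀ F : (Path X → EReal) → EReal, IsCapacity F →
      F f = sSup {a : EReal | ∃ g : Path X → EReal, USC g ∧
        (∀ ω, 0 ≤ g ω ∧ g ω < ⊤) ∧ (∀ ω, g ω ≤ f ω) ∧ a = F g} := by
  rintro F ⟨-, hFmono, hFup, hFdown⟩
  have : PolishSpace X := {}
  refine le_antisymm (le_of_forall_lt_imp_le_of_dense fun a ha => ?_) (sSup_le ?_)
  · obtain ⟨g, hg_usc, hg, hgf, hag⟩ := exists_upperSemicontinuous_le_capacity hFmono hFup
      (fun fn h0 hu hanti => hFdown fn h0 (fun n => .of_upperSemicontinuous (hu n)) hanti)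
      hf0 hmeas ha
    exact hag.trans (le_sSup ⟨g, .of_upperSemicontinuous hg_usc, hg, hgf, rfl⟩)
  · rintro _ ⟨g, -, hg, hgf, rfl⟩
    exact hFmono g f (fun ω => (hg ω).1) hf0 hgf

end UEPaper
end

section
/- Let F be an operator mapping functions Ω → ℝ̄ to ℝ̄ that is monotone (f ≤ g pointwise implies F(f) ≤ F(g)) and continuous with respect to non-increasing sequences of finitary gambles (lim_n F(f_n) = F(lim_n f_n) whenever (f_n) is a pointwise non-increasing sequence of finitary gambles). Then F is continuous with respect to non-increasing sequences of upper semicontinuous bounded-above variables: for every pointwise non-increasing sequence (f_n) of upper semicontinuous, bounded-above functions f_n: Ω → ℝ̄ with pointwise limit f = inf_n f_n, lim_{n→∞} F(f_n) = F(f). -/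
/-! Replace `fn k` by its supremum over the cylinder of length `k` through each path, floored at
`-k`. These are finitary gambles that decrease in `k` and dominate `fn k`; since cylinders form a
neighbourhood basis and each `fn n` is upper semicontinuous, their infimum is still `f`. Hence
`F (fn k)` is squeezed between `F f` and `F` of the approximants, which tends to `F f`. -/

open Filter MeasureTheory Topology
open scoped ENNReal

namespace UEPaper

variable {X : Type} [Fintype X] [Nonempty X] [DecidableEq X]

section

omit [Fintype X] [Nonempty X] [DecidableEq X]

theorem prefixList_eq_iff {ω ω' : Path X} {k : ℕ} :
    prefixList ω k = prefixList ω' k ↔ ∀ i < k, ω i = ω' i := by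
  simp [prefixList, List.map_inj_left]

theorem prefixList_eq_of_le {ω ω' : Path X} {k m : ℕ} (hkm : k ≤ m)
    (h : prefixList ω m = prefixList ω' m) : prefixList ω k = prefixList ω' k :=
  prefixList_eq_iff.mpr fun i hi => prefixList_eq_iff.mp h i (hi.trans_le hkm)

theorem exists_prefixList_eq_subset_of_isOpen [TopologicalSpace X] {U : Set (Path X)}
    (hU : IsOpen U) {ω : Path X} (hω : ω ∈ U) :
    ∃ k, {w | prefixList w k = prefixList ω k} ⊆ U := by
  obtain ⟨I, u, hu, hIu⟩ := isOpen_pi_iff.mp hU ω hω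
  refine ⟨I.sup id + 1, fun w hw => hIu fun i hi => ?_⟩
  have hik : i < I.sup id + 1 := Nat.lt_succ_of_le (Finset.le_sup (f := id) hi)
  rw [prefixList_eq_iff.mp hw i hik]
  exact (hu i hi).2

noncomputable def cylSup (g : Path X → EReal) (k : ℕ) (ω : Path X) : EReal :=
  ⨆ (w : Path X) (_ : prefixList w k = prefixList ω k), g w

theorem le_cylSup (g : Path X → EReal) (k : ℕ) (ω : Path X) : g ω ≤ cylSup g k ω :=
  le_iSup₂_of_le ω rfl le_rfl

theorem cylSup_le {g : Path X → EReal} {c : EReal} (h : ∀ ω, g ω ≤ c) (k : ℕ) (ω : Path X) :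
    cylSup g k ω ≤ c :=
  iSup₂_le fun w _ => h w

theorem cylSup_anti {g g' : Path X → EReal} (hg : ∀ ω, g ω ≤ g' ω) {k m : ℕ} (hkm : k ≤ m)
    (ω : Path X) : cylSup g m ω ≤ cylSup g' k ω :=
  iSup₂_le fun w hw => (hg w).trans (le_iSup₂_of_le w (prefixList_eq_of_le hkm hw) le_rfl)

theorem nMeas_cylSup (g : Path X → EReal) (k : ℕ) : NMeas k (cylSup g k) := by
  intro ω ω' h
  simp only [cylSup, h]

theorem USC.exists_cylSup_le [TopologicalSpace X] [DiscreteTopology X] {g : Path X → EReal}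
    (hg : USC g) {ω : Path X} {c : ℝ} (hc : g ω < c) : ∃ k, cylSup g k ω ≤ c := by
  obtain ⟨k, hk⟩ := exists_prefixList_eq_subset_of_isOpen (hg c) hc
  exact ⟨k, iSup₂_le fun w hw => (hk hw).le⟩

noncomputable def finApprox (fn : ℕ → Path X → EReal) (k : ℕ) (ω : Path X) : EReal :=
  cylSup (fn k) k ω ⊔ ((-k : ℝ) : EReal)

theorem le_finApprox (fn : ℕ → Path X → EReal) (k : ℕ) (ω : Path X) :
    fn k ω ≤ finApprox fn k ω :=
  (le_cylSup _ _ _).trans le_sup_left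

theorem antitone_finApprox {fn : ℕ → Path X → EReal} (hanti : Antitone fn) :
    Antitone (finApprox fn) := fun k m hkm ω =>
  sup_le_sup (cylSup_anti (fun w => hanti hkm w) hkm ω)
    (EReal.coe_le_coe_iff.mpr (by simpa using hkm))

theorem isFinGamble_finApprox {fn : ℕ → Path X → EReal} {k : ℕ} {B : ℝ}
    (hB : ∀ ω, fn k ω ≤ B) : IsFinGamble (finApprox fn k) := by
  refine ⟨⟨k, fun ω ω' h => by simp only [finApprox, nMeas_cylSup _ k ω ω' h]⟩,
    max B k, fun ω => ⟨?_, ?_⟩⟩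
  · rw [← EReal.coe_neg]
    exact le_sup_of_le_right (EReal.coe_le_coe_iff.mpr (by simp))
  · refine sup_le (cylSup_le (fun w => (hB w).trans ?_) k ω) (EReal.coe_le_coe_iff.mpr ?_)
    · exact EReal.coe_le_coe_iff.mpr (le_max_left _ _)
    · linarith [le_max_right B k, (Nat.cast_nonneg k : (0 : ℝ) ≤ k)]

theorem iInf_finApprox [TopologicalSpace X] [DiscreteTopology X] {fn : ℕ → Path X → EReal}
    (husc : ∀ n, USC (fn n)) (hanti : Antitone fn) (ω : Path X) :
    ⨅ k, finApprox fn k ω = ⨅ n, fn n ω := by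
  refine le_antisymm (le_iInf fun n => EReal.le_of_forall_lt_iff_le.mp fun c hc => ?_)
    (iInf_mono fun k => le_finApprox fn k ω)
  obtain ⟨k, hk⟩ := (husc n).exists_cylSup_le hc
  obtain ⟨m₀, hm₀⟩ := exists_nat_ge (-c)
  set m := max n (max k m₀)
  refine (iInf_le _ m).trans (sup_le ?_ (EReal.coe_le_coe_iff.mpr ?_))
  · exact (cylSup_anti (fun w => hanti (le_max_left n _) w)
      ((le_max_left k m₀).trans (le_max_right n _)) ω).trans hk
  · have : (m₀ : ℝ) ≤ m := by exact_mod_cast (le_max_right k m₀).trans (le_max_right n _)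
    linarith

end

theorem stmt17 [TopologicalSpace X] [DiscreteTopology X]
    (F : (Path X → EReal) → EReal)
    (hmono : ∀ f g : Path X → EReal, (∀ ω, f ω ≤ g ω) → F f ≤ F g)
    (hcont : ∀ fn : ℕ → Path X → EReal, (∀ n, IsFinGamble (fn n)) → Antitone fn →
      Tendsto (fun n => F (fn n)) atTop (nhds (F (fun ω => ⨅ n, fn n ω))))
    (fn : ℕ → Path X → EReal)
    (husc : ∀ n, USC (fn n)) (hba : ∀ n, ∃ B : ℝ, ∀ ω, fn n ω ≤ (B : EReal))
    (hanti : Antitone fn) (f : Path X → EReal) (hf : ∀ ω, f ω = ⨅ n, fn n ω) :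
    Tendsto (fun n => F (fn n)) atTop (nhds (F f)) := by
  have hfin : ∀ k, IsFinGamble (finApprox fn k) := fun k =>
    isFinGamble_finApprox (hba k).choose_spec
  have happrox : Tendsto (fun k => F (finApprox fn k)) atTop (nhds (F f)) := by
    have hlim : (fun ω => ⨅ k, finApprox fn k ω) = f :=
      funext fun ω => (iInf_finApprox husc hanti ω).trans (hf ω).symm
    simpa only [hlim] using hcont _ hfin (antitone_finApprox hanti)
  refine tendsto_of_tendsto_of_tendsto_of_le_of_le tendsto_const_nhds happrox
    (fun k => hmono _ _ fun ω => ?_) (fun k => hmono _ _ (le_finApprox fn k))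
  exact (hf ω).le.trans (iInf_le _ k)

end UEPaper
end
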